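/- arXiv:1502.05334 — 4 statements merged into one kernel-verified Lean document; each statement's English description precedes it below -/
import Mathlib

section
/- Every D3-reducible graph has a Hamiltonian cycle. -/
/-- A finite graph on a subset of `ℕ`, allowing vertex-set changes under reductions. -/
structure FinGraph where
  verts : Finset ℕ
  Adj : ℕ → ℕ → Prop
  symm : ∀ u v, Adj u v → Adj v u
  loopless : ∀ u, ¬ Adj u u
  support : ∀ u v, Adj u v → u ∈ verts ∧ v ∈ verts

namespace FinGraph

def neighborSet (G : FinGraph) (v : ℕ) : Set ℕ := {u | G.Adj v u}

/-- The degree of a vertex. -/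
noncomputable def degree (G : FinGraph) (v : ℕ) : ℕ := (G.neighborSet v).ncard

/-- Reachability by a walk staying inside the set `S`. -/
def ReachableWithin (G : FinGraph) (S : Set ℕ) (u v : ℕ) : Prop :=
  Relation.ReflTransGen (fun a b => G.Adj a b ∧ a ∈ S ∧ b ∈ S) u v

/-- The subgraph induced on `S` is connected. -/
def ConnectedOn (G : FinGraph) (S : Set ℕ) : Prop :=
  ∀ u ∈ S, ∀ v ∈ S, G.ReachableWithin S u v

def Connected (G : FinGraph) : Prop := G.ConnectedOn ↑G.verts

/-- 3-vertex-connectivity: more than three vertices, and connected after deleting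
any two vertices. -/
def ThreeConnected (G : FinGraph) : Prop :=
  3 < G.verts.card ∧ ∀ x y : ℕ, G.ConnectedOn (↑G.verts \ {x, y})

/-- Graph isomorphism. -/
def Iso (G H : FinGraph) : Prop :=
  ∃ f : ℕ → ℕ, Set.BijOn f ↑G.verts ↑H.verts ∧
    ∀ u ∈ G.verts, ∀ v ∈ G.verts, (G.Adj u v ↔ H.Adj (f u) (f v))

/-- The configuration for a D3a reduction: a triangle `p q r` of degree-three
vertices whose outside neighbors `p' q' r'` are three distinct vertices. -/
def D3aConfig (G : FinGraph) (p q r p' q' r' : ℕ) : Prop :=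
  G.degree p = 3 ∧ G.degree q = 3 ∧ G.degree r = 3 ∧
  G.Adj p q ∧ G.Adj q r ∧ G.Adj p r ∧
  G.Adj p p' ∧ G.Adj q q' ∧ G.Adj r r' ∧
  p' ∉ ({p, q, r} : Set ℕ) ∧ q' ∉ ({p, q, r} : Set ℕ) ∧ r' ∉ ({p, q, r} : Set ℕ) ∧
  p' ≠ q' ∧ p' ≠ r' ∧ q' ≠ r'

/-- A D3a reduction from `G` to `H`: collapse such a triangle to a new vertex `t`. -/
def D3a (G H : FinGraph) : Prop :=
  ∃ p q r p' q' r' t, G.D3aConfig p q r p' q' r' ∧ t ∉ G.verts ∧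
    H.verts = (G.verts \ {p, q, r}) ∪ {t} ∧
    ∀ a b, H.Adj a b ↔
      (G.Adj a b ∧ a ∉ ({p, q, r} : Set ℕ) ∧ b ∉ ({p, q, r} : Set ℕ)) ∨
      (a = t ∧ b ∈ ({p', q', r'} : Set ℕ)) ∨
      (b = t ∧ a ∈ ({p', q', r'} : Set ℕ))

/-- The configuration for a D3b reduction: an induced path `p q r` of degree-three
vertices, all adjacent to a common apex `s`. -/
def D3bConfig (G : FinGraph) (p q r s : ℕ) : Prop :=
  G.degree p = 3 ∧ G.degree q = 3 ∧ G.degree r = 3 ∧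
  G.Adj p q ∧ G.Adj q r ∧ ¬ G.Adj p r ∧ p ≠ r ∧
  G.Adj s p ∧ G.Adj s q ∧ G.Adj s r

/-- A D3b reduction from `G` to `H`: delete the middle vertex `q` and add edge `pr`. -/
def D3b (G H : FinGraph) : Prop :=
  ∃ p q r s, G.D3bConfig p q r s ∧
    H.verts = G.verts \ {q} ∧
    ∀ a b, H.Adj a b ↔
      (G.Adj a b ∧ a ≠ q ∧ b ≠ q) ∨ (a = p ∧ b = r) ∨ (a = r ∧ b = p)

/-- A single D3 reduction. -/
def D3Step (G H : FinGraph) : Prop := G.D3a H ∨ G.D3b H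

/-- `G` is a complete graph on four vertices. -/
def IsK4 (G : FinGraph) : Prop :=
  G.verts.card = 4 ∧ ∀ u ∈ G.verts, ∀ v ∈ G.verts, u ≠ v → G.Adj u v

/-- A graph is D3-reducible if some sequence of D3 reductions takes it to `K₄`. -/
def D3Reducible (G : FinGraph) : Prop :=
  ∃ H, Relation.ReflTransGen D3Step G H ∧ H.IsK4

/-- No D3 reduction applies. -/
def Irreducible (G : FinGraph) : Prop := ¬ ∃ H, G.D3Step H

/-- `H` is a minor of `G`, witnessed by connected, disjoint branch sets. -/
def HasMinor (G H : FinGraph) : Prop :=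
  ∃ B : ℕ → Finset ℕ,
    (∀ v ∈ H.verts, (B v).Nonempty ∧ ↑(B v) ⊆ (↑G.verts : Set ℕ) ∧ G.ConnectedOn ↑(B v)) ∧
    (∀ u ∈ H.verts, ∀ v ∈ H.verts, u ≠ v → Disjoint (B u) (B v)) ∧
    (∀ u v, H.Adj u v → ∃ a ∈ B u, ∃ b ∈ B v, G.Adj a b)

def K5Graph : FinGraph where
  verts := Finset.range 5
  Adj a b := a ≠ b ∧ a < 5 ∧ b < 5
  symm := fun _ _ h => ⟨Ne.symm h.1, h.2.2, h.2.1⟩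
  loopless := fun _ h => h.1 rfl
  support := fun _ _ h => ⟨Finset.mem_range.2 h.2.1, Finset.mem_range.2 h.2.2⟩

def K33Graph : FinGraph where
  verts := Finset.range 6
  Adj a b := (a < 3 ∧ 3 ≤ b ∧ b < 6) ∨ (b < 3 ∧ 3 ≤ a ∧ a < 6)
  symm := fun _ _ h => h.elim Or.inr Or.inl
  loopless := by intro u h; rcases h with ⟨h1, h2, _⟩ | ⟨h1, h2, _⟩ <;> omega
  support := by
    intro u v h
    constructor <;> rw [Finset.mem_range] <;>
      rcases h with ⟨h1, h2, h3⟩ | ⟨h1, h2, h3⟩ <;> omega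

/-- Planarity, via Wagner's characterization: no `K₅` and no `K₃,₃` minor. -/
def Planar (G : FinGraph) : Prop := ¬ G.HasMinor K5Graph ∧ ¬ G.HasMinor K33Graph

/-- `T` is a tree: nonempty, connected, and every edge is a bridge (acyclicity). -/
def IsTreeGraph (T : FinGraph) : Prop :=
  T.verts.Nonempty ∧ T.Connected ∧
  ∀ u v, T.Adj u v → ¬ Relation.ReflTransGen
    (fun a b => T.Adj a b ∧ ¬(a = u ∧ b = v) ∧ ¬(a = v ∧ b = u)) u v

def IsLeaf (T : FinGraph) (v : ℕ) : Prop := T.degree v = 1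

/-- The edges of `G` not in the spanning tree `T` (the candidate cycle edges). -/
def cycleAdj (G T : FinGraph) (a b : ℕ) : Prop := G.Adj a b ∧ ¬ T.Adj a b

/-- `G` is a Halin graph with underlying tree `T`: `T` is a spanning tree with at
least four vertices and no degree-two vertex, the non-tree edges form a single
cycle passing exactly through the leaves of `T`, and `G` is planar (which forces
the cycle to traverse the leaves in the cyclic order of a planar embedding of `T`). -/
def IsHalinVia (G T : FinGraph) : Prop :=
  IsTreeGraph T ∧ T.verts = G.verts ∧ 4 ≤ T.verts.card ∧
  (∀ v ∈ T.verts, T.degree v ≠ 2) ∧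
  (∀ a b, T.Adj a b → G.Adj a b) ∧
  (∀ a b, cycleAdj G T a b → T.IsLeaf a ∧ T.IsLeaf b) ∧
  (∀ v ∈ G.verts, T.IsLeaf v → {u | cycleAdj G T v u}.ncard = 2) ∧
  (∀ u v, u ∈ G.verts → v ∈ G.verts → T.IsLeaf u → T.IsLeaf v →
    Relation.ReflTransGen (cycleAdj G T) u v) ∧
  G.Planar

def IsHalin (G : FinGraph) : Prop := ∃ T, IsHalinVia G T

/-- Treewidth at most `k`, via tree decompositions. -/
def TreewidthLE (G : FinGraph) (k : ℕ) : Prop :=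
  ∃ (ι : Type) (T : SimpleGraph ι) (bag : ι → Finset ℕ),
    T.IsTree ∧
    (∀ v ∈ G.verts, ∃ i, v ∈ bag i) ∧
    (∀ u v, G.Adj u v → ∃ i, u ∈ bag i ∧ v ∈ bag i) ∧
    (∀ (v : ℕ) (i j : ι) (p : T.Walk i j), p.IsPath → v ∈ bag i → v ∈ bag j →
      ∀ m ∈ p.support, v ∈ bag m) ∧
    (∀ i, (bag i).card ≤ k + 1)

/-- A face of a 3-connected planar graph, by Tutte's characterization:
an induced cycle whose complement induces a connected subgraph. -/
def IsFaceCycle (G : FinGraph) (C : Finset ℕ) : Prop :=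
  ↑C ⊆ (↑G.verts : Set ℕ) ∧ 3 ≤ C.card ∧
  (∀ v ∈ C, {u | u ∈ C ∧ G.Adj v u}.ncard = 2) ∧
  G.ConnectedOn ↑C ∧
  G.ConnectedOn (↑G.verts \ ↑C)

/-- `D` is the planar dual of the (3-connected planar) graph `G`: its vertices
correspond bijectively to the faces of `G`, with adjacency for faces sharing an edge. -/
def IsDualOf (D G : FinGraph) : Prop :=
  ∃ F : ℕ → Finset ℕ,
    Set.InjOn F ↑D.verts ∧
    (∀ d ∈ D.verts, IsFaceCycle G (F d)) ∧
    (∀ C, IsFaceCycle G C → ∃ d ∈ D.verts, F d = C) ∧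
    (∀ d e, D.Adj d e ↔ d ∈ D.verts ∧ e ∈ D.verts ∧ d ≠ e ∧
      ∃ u v, G.Adj u v ∧ u ∈ F d ∧ v ∈ F d ∧ u ∈ F e ∧ v ∈ F e)

/-- A wheel graph: a hub adjacent to all other vertices, which form a cycle. -/
def IsWheel (G : FinGraph) : Prop :=
  4 ≤ G.verts.card ∧ ∃ h ∈ G.verts,
    (∀ v ∈ G.verts, v ≠ h → G.Adj h v ∧ G.degree v = 3) ∧
    G.ConnectedOn (↑G.verts \ {h})

/-- Glue the wheel `W` onto `G` along a shared triangular face `{a,b,c}`,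
identifying the two faces vertexwise, producing `H`. -/
def GlueStep (G W H : FinGraph) : Prop :=
  ∃ a b c : ℕ, a ≠ b ∧ a ≠ c ∧ b ≠ c ∧
    IsFaceCycle G {a, b, c} ∧ IsFaceCycle W {a, b, c} ∧
    (↑G.verts ∩ ↑W.verts : Set ℕ) = {a, b, c} ∧
    H.verts = G.verts ∪ W.verts ∧
    (∀ u v, H.Adj u v ↔ G.Adj u v ∨ W.Adj u v)

/-- Graphs constructed by gluing wheels together along triangular faces.
(Each gluing attaches one further wheel along a current triangular face; a glued
face stops being a face, so each face is used at most once, and no graph is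
glued to itself.) -/
inductive GluedWheels : FinGraph → Prop
  | base (G : FinGraph) : IsWheel G → GluedWheels G
  | glue (G W H : FinGraph) : GluedWheels G → IsWheel W → GlueStep G W H → GluedWheels H

/-- Delete vertices in `S` from `G`. -/
def removeVerts (G : FinGraph) (S : Finset ℕ) : FinGraph where
  verts := G.verts \ S
  Adj a b := G.Adj a b ∧ a ∉ S ∧ b ∉ S
  symm := fun u v h => ⟨G.symm u v h.1, h.2.2, h.2.1⟩
  loopless := fun u h => G.loopless u h.1
  support := fun u v h =>
    ⟨Finset.mem_sdiff.2 ⟨(G.support u v h.1).1, h.2.1⟩,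
     Finset.mem_sdiff.2 ⟨(G.support u v h.1).2, h.2.2⟩⟩

/-- Delete the edge `uv` from `G`. -/
def deleteEdge (G : FinGraph) (u v : ℕ) : FinGraph where
  verts := G.verts
  Adj a b := G.Adj a b ∧ ¬((a = u ∧ b = v) ∨ (a = v ∧ b = u))
  symm := fun a b h => ⟨G.symm a b h.1, by tauto⟩
  loopless := fun a h => G.loopless a h.1
  support := fun a b h => G.support a b h.1

end FinGraph


/-!
Undoing a D3 reduction preserves Hamiltonicity, and `K₄` is Hamiltonian. A Hamiltonian cycle of
the reduced graph enters and leaves the new vertex `t` of a D3a reduction through two of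
`p', q', r'`, and can be rerouted through the triangle `p q r` instead. In a D3b reduction the
cycle passes `p` through two of its neighbours `s`, `r` and a third one, and the deleted vertex `q`
is spliced in next to `p`. Cycles are taken as `Cycle ℕ`, so that they can be rotated to start
anywhere.
-/

namespace Cycle

variable {α : Type*}

theorem exists_eq_coe_cons {c : Cycle α} {a : α} (h : a ∈ c) : ∃ l : List α, c = ↑(a :: l) := by
  induction c using Quotient.inductionOn' with
  | h L =>
    obtain ⟨s, t, rfl⟩ := List.append_of_mem (mem_coe_iff.1 h)
    exact ⟨t ++ s, coe_eq_coe.2 List.isRotated_append⟩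

theorem mem_toFinset [DecidableEq α] {c : Cycle α} {a : α} : a ∈ c.toFinset ↔ a ∈ c := by
  induction c using Quotient.inductionOn'
  exact List.mem_toFinset

theorem chain_coe_cons_cons_cons {r : α → α → Prop} {x v y : α} {l : List α} :
    Chain r ↑(x :: v :: y :: l) ↔ r x v ∧ r v y ∧ List.IsChain r (y :: (l ++ [x])) := by
  simp [chain_coe_cons]

theorem chain_coe_cons_iff {r : α → α → Prop} {a : α} {l : List α} :
    Chain r ↑(a :: l) ↔
      List.IsChain r (a :: l) ∧ r ((a :: l).getLast (List.cons_ne_nil a l)) a := by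
  rw [chain_coe_cons, ← List.cons_append, List.isChain_append]
  simp [List.getLast?_eq_some_getLast]

end Cycle

namespace FinGraph

variable {G H : FinGraph}

theorem ne_of_adj {a b : ℕ} (h : G.Adj a b) : a ≠ b := by
  rintro rfl
  exact G.loopless a h

theorem exists_adj_eq_of_degree_eq_three {v a b : ℕ} (hv : G.degree v = 3) (ha : G.Adj v a)
    (hb : G.Adj v b) (hab : a ≠ b) : ∃ c, ∀ z, G.Adj v z → z = a ∨ z = b ∨ z = c := by
  have hsub : ({a, b} : Set ℕ) ⊆ G.neighborSet v := Set.pair_subset ha hb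
  have hrest : (G.neighborSet v \ {a, b}).ncard = 1 := by
    rw [Set.ncard_sdiff hsub, Set.ncard_pair hab]
    exact congrArg (· - 2) hv
  obtain ⟨c, hc⟩ := Set.ncard_eq_one.1 hrest
  refine ⟨c, fun z hz => ?_⟩
  by_contra! hne
  have : z ∈ G.neighborSet v \ {a, b} := ⟨hz, by simp [hne.1, hne.2.1]⟩
  exact hne.2.2 (by simpa [hc] using this)

structure IsHamCycle (G : FinGraph) (c : Cycle ℕ) : Prop where
  nodup : c.Nodup
  toFinset_eq : c.toFinset = G.verts
  chain : c.Chain G.Adj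
  three_le_length : 3 ≤ c.length

theorem IsHamCycle.exists_eq_coe_of_mem {c : Cycle ℕ} (hc : G.IsHamCycle c) {v : ℕ} (hv : v ∈ G.verts) :
    ∃ x y l, c = ↑(x :: v :: y :: l) := by
  obtain ⟨m, rfl⟩ := Cycle.exists_eq_coe_cons (Cycle.mem_toFinset.1 (hc.toFinset_eq ▸ hv))
  have hlen := hc.three_le_length
  obtain _ | ⟨y, m⟩ := m
  · simp at hlen
  obtain rfl | ⟨l, x, rfl⟩ := List.eq_nil_or_concat m
  · simp at hlen
  exact ⟨x, y, l, by simpa using (Cycle.coe_cons_eq_coe_append (v :: y :: l) x).symm⟩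

theorem IsHamCycle.splice {x v y : ℕ} {w l : List ℕ} (hH : H.IsHamCycle ↑(x :: v :: y :: l))
    (hHG : ∀ a b, H.Adj a b → a ≠ v → b ≠ v → G.Adj a b)
    (hw : w ≠ []) (hwnd : w.Nodup) (hwH : ∀ z ∈ w, z ∈ H.verts → z = v)
    (hverts : G.verts = H.verts.erase v ∪ w.toFinset)
    (hpath : List.IsChain G.Adj (x :: (w ++ [y]))) :
    G.IsHamCycle ↑(x :: (w ++ y :: l)) := by
  have hnd : (x :: v :: y :: l).Nodup := Cycle.nodup_coe_iff.1 hH.nodup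
  have hHverts : ∀ z, z ∈ H.verts ↔ z = v ∨ z ∈ x :: y :: l := by
    intro z
    rw [← hH.toFinset_eq, Cycle.coe_toFinset, List.mem_toFinset]
    simp only [List.mem_cons]
    tauto
  have hv : v ∉ x :: y :: l := by
    simp only [List.nodup_cons, List.mem_cons] at hnd ⊢
    tauto
  have hrest : List.IsChain G.Adj (y :: (l ++ [x])) :=
    (Cycle.chain_coe_cons_cons_cons.1 hH.chain).2.2.imp_of_mem_imp fun a b ha hb hab =>
      hHG a b hab (by rintro rfl; simp_all) (by rintro rfl; simp_all)
  have hdisj : w.Disjoint (x :: y :: l) := fun z hzw hz =>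
    hv (hwH z hzw ((hHverts z).2 (Or.inr hz)) ▸ hz)
  refine ⟨?_, ?_, ?_, ?_⟩
  · rw [Cycle.nodup_coe_iff, ← List.perm_middle.nodup_iff]
    exact hwnd.append (hnd.sublist ((List.sublist_cons_self v _).cons_cons x)) hdisj
  · ext z
    rw [Cycle.coe_toFinset, List.mem_toFinset, hverts, Finset.mem_union, Finset.mem_erase,
      hHverts, List.mem_toFinset]
    simp only [List.mem_cons, List.mem_append] at hv ⊢
    grind
  · rw [Cycle.chain_coe_cons, List.append_assoc, List.cons_append, ← List.cons_append,
      List.isChain_split]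
    exact ⟨hpath, hrest⟩
  · have := List.length_pos_iff.2 hw
    simp only [Cycle.length_coe, List.length_cons, List.length_append]
    omega

theorem exists_isHamCycle_of_isK4 (hK : G.IsK4) : ∃ c, G.IsHamCycle c := by
  obtain ⟨hcard, hadj⟩ := hK
  obtain ⟨a, b, c, d, hab, hac, had, hbc, hbd, hcd, hV⟩ := Finset.card_eq_four.1 hcard
  have hmem : a ∈ G.verts ∧ b ∈ G.verts ∧ c ∈ G.verts ∧ d ∈ G.verts := by simp [hV]
  refine ⟨↑[a, b, c, d], ?_, ?_, ?_, by simp⟩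
  · simp [hab, hac, had, hbc, hbd, hcd]
  · simp [hV]
  · simp [Cycle.chain_coe_cons, hadj, hmem, hab, hbc, hcd, had.symm]

theorem D3aConfig.exists_path {p q r p' q' r' x y : ℕ} (hcfg : G.D3aConfig p q r p' q' r')
    (hx : x ∈ ({p', q', r'} : Set ℕ)) (hy : y ∈ ({p', q', r'} : Set ℕ)) (hxy : x ≠ y) :
    ∃ w : List ℕ, w.Perm [p, q, r] ∧ List.IsChain G.Adj (x :: (w ++ [y])) := by
  obtain ⟨-, -, -, hpq, hqr, hpr, hpp', hqq', hrr', -⟩ := hcfg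
  have := G.symm _ _ hpq
  have := G.symm _ _ hqr
  have := G.symm _ _ hpr
  have := G.symm _ _ hpp'
  have := G.symm _ _ hqq'
  have := G.symm _ _ hrr'
  rcases hx with rfl | rfl | rfl <;> rcases hy with rfl | rfl | rfl
  · exact absurd rfl hxy
  · exact ⟨[p, r, q], by grind, by simp [*]⟩
  · exact ⟨[p, q, r], by grind, by simp [*]⟩
  · exact ⟨[q, r, p], by grind, by simp [*]⟩
  · exact absurd rfl hxy
  · exact ⟨[q, p, r], by grind, by simp [*]⟩
  · exact ⟨[r, q, p], by grind, by simp [*]⟩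
  · exact ⟨[r, p, q], by grind, by simp [*]⟩
  · exact absurd rfl hxy

theorem exists_isHamCycle_of_d3a (hGH : G.D3a H) (hH : ∃ c, H.IsHamCycle c) :
    ∃ c, G.IsHamCycle c := by
  obtain ⟨p, q, r, p', q', r', t, hcfg, htG, hV, hAdj⟩ := hGH
  obtain ⟨c, hc⟩ := hH
  obtain ⟨x, y, l, rfl⟩ := hc.exists_eq_coe_of_mem (by simp [hV] : t ∈ H.verts)
  obtain ⟨hxt, hty, -⟩ := Cycle.chain_coe_cons_cons_cons.1 hc.chain
  have hxy : x ≠ y := by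
    have := Cycle.nodup_coe_iff.1 hc.nodup
    grind
  have hx : x ∈ ({p', q', r'} : Set ℕ) := by
    rcases (hAdj x t).1 hxt with ⟨h, -⟩ | ⟨rfl, -⟩ | ⟨-, hx⟩
    · exact absurd (G.support _ _ h).2 htG
    · exact absurd hxt (H.loopless _)
    · exact hx
  have hy : y ∈ ({p', q', r'} : Set ℕ) := by
    rcases (hAdj t y).1 hty with ⟨h, -⟩ | ⟨-, hy⟩ | ⟨rfl, -⟩
    · exact absurd (G.support _ _ h).1 htG
    · exact hy
    · exact absurd hty (H.loopless _)
  obtain ⟨w, hw, hpath⟩ := hcfg.exists_path hx hy hxy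
  obtain ⟨-, -, -, hpq, hqr, hpr, -⟩ := hcfg
  have hpqr : p ∈ G.verts ∧ q ∈ G.verts ∧ r ∈ G.verts :=
    ⟨(G.support _ _ hpq).1, (G.support _ _ hqr).1, (G.support _ _ hqr).2⟩
  refine ⟨_, hc.splice (w := w) ?_ ?_ ?_ ?_ ?_ hpath⟩
  · intro a b hab ha hb
    rcases (hAdj a b).1 hab with ⟨h, -⟩ | ⟨rfl, -⟩ | ⟨rfl, -⟩
    exacts [h, absurd rfl ha, absurd rfl hb]
  · rintro rfl
    simp at hw
  · rw [hw.nodup_iff]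
    simp [ne_of_adj hpq, ne_of_adj hqr, ne_of_adj hpr]
  · intro z hzw hzH
    rw [hw.mem_iff] at hzw
    simp [hV] at hzH hzw
    grind
  · rw [List.toFinset_eq_of_perm _ _ hw, hV]
    ext z
    simp
    grind

-- The cycle leaves `p` along `pr` or `sp`, as the third neighbour of `p` cannot take both places;
-- `q` is spliced in next to `p` on that side.
theorem D3bConfig.exists_path {p q r s x y : ℕ} (hcfg : G.D3bConfig p q r s)
    (hAdj : ∀ a b, H.Adj a b ↔
      (G.Adj a b ∧ a ≠ q ∧ b ≠ q) ∨ (a = p ∧ b = r) ∨ (a = r ∧ b = p))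
    (hxp : H.Adj x p) (hpy : H.Adj p y) (hxy : x ≠ y) :
    ∃ w : List ℕ, w.Perm [p, q] ∧ List.IsChain G.Adj (x :: (w ++ [y])) := by
  obtain ⟨hdp, -, -, hpq, hqr, -, hpr, hsp, hsq, -⟩ := hcfg
  have hHp : ∀ z, H.Adj p z → z ≠ r → G.Adj p z ∧ z ≠ q := by
    intro z hz hzr
    rcases (hAdj p z).1 hz with ⟨h, -, hzq⟩ | ⟨-, rfl⟩ | ⟨rfl, -⟩
    exacts [⟨h, hzq⟩, absurd rfl hzr, absurd rfl hpr]
  obtain ⟨o, ho⟩ := exists_adj_eq_of_degree_eq_three hdp hpq (G.symm _ _ hsp)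
    (ne_of_adj hsq).symm
  have hso : ∀ z, H.Adj p z → z ≠ r → z = s ∨ z = o := fun z hz hzr =>
    (ho z (hHp z hz hzr).1).resolve_left (hHp z hz hzr).2
  have hpx := H.symm _ _ hxp
  have hqp := G.symm _ _ hpq
  have hrq := G.symm _ _ hqr
  have hqs := G.symm _ _ hsq
  by_cases hxr : x = r
  · subst hxr
    exact ⟨[q, p], .swap _ _ _, by simp [*, (hHp y hpy (Ne.symm hxy)).1]⟩
  by_cases hyr : y = r
  · subst hyr
    exact ⟨[p, q], .refl _, by simp [*, G.symm _ _ (hHp x hpx hxr).1]⟩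
  rcases hso x hpx hxr with rfl | rfl
  · exact ⟨[q, p], .swap _ _ _, by simp [*, (hHp y hpy hyr).1]⟩
  · obtain rfl : y = s := (hso y hpy hyr).resolve_right (Ne.symm hxy)
    exact ⟨[p, q], .refl _, by simp [*, G.symm _ _ (hHp x hpx hxr).1]⟩

theorem exists_isHamCycle_of_d3b (hGH : G.D3b H) (hH : ∃ c, H.IsHamCycle c) :
    ∃ c, G.IsHamCycle c := by
  obtain ⟨p, q, r, s, hcfg, hV, hAdj⟩ := hGH
  obtain ⟨c, hc⟩ := hH
  have hpq := hcfg.2.2.2.1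
  have hpqG : p ∈ G.verts ∧ q ∈ G.verts := G.support _ _ hpq
  obtain ⟨x, y, l, rfl⟩ :=
    hc.exists_eq_coe_of_mem (by simp [hV, hpqG, ne_of_adj hpq] : p ∈ H.verts)
  obtain ⟨hxp, hpy, -⟩ := Cycle.chain_coe_cons_cons_cons.1 hc.chain
  have hxy : x ≠ y := by
    have := Cycle.nodup_coe_iff.1 hc.nodup
    grind
  obtain ⟨w, hw, hpath⟩ := hcfg.exists_path hAdj hxp hpy hxy
  refine ⟨_, hc.splice (w := w) ?_ ?_ ?_ ?_ ?_ hpath⟩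
  · intro a b hab ha hb
    rcases (hAdj a b).1 hab with ⟨h, -⟩ | ⟨rfl, -⟩ | ⟨-, rfl⟩
    exacts [h, absurd rfl ha, absurd rfl hb]
  · rintro rfl
    simp at hw
  · rw [hw.nodup_iff]
    simp [ne_of_adj hpq]
  · intro z hzw hzH
    rw [hw.mem_iff] at hzw
    simp [hV] at hzH hzw
    tauto
  · rw [List.toFinset_eq_of_perm _ _ hw, hV]
    ext z
    simp
    grind

theorem exists_isHamCycle_of_d3Reducible (h : G.D3Reducible) : ∃ c, G.IsHamCycle c := by
  obtain ⟨K, hsteps, hK⟩ := h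
  induction hsteps using Relation.ReflTransGen.head_induction_on with
  | refl => exact exists_isHamCycle_of_isK4 hK
  | head hstep _ ih =>
    exact hstep.elim (exists_isHamCycle_of_d3a · ih) (exists_isHamCycle_of_d3b · ih)

end FinGraph

theorem d3_reducible_hamiltonian (G : FinGraph) (h : G.D3Reducible) :
    ∃ (u : ℕ) (l : List ℕ), (u :: l).Nodup ∧ (u :: l).toFinset = G.verts ∧
      List.Chain G.Adj u l ∧ G.Adj ((u :: l).getLast (List.cons_ne_nil u l)) u ∧
      2 ≤ l.length := by
  obtain ⟨c, hc⟩ := G.exists_isHamCycle_of_d3Reducible h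
  induction c using Cycle.induction_on with
  | nil => exact absurd hc.three_le_length (by simp)
  | cons u l _ =>
    obtain ⟨hchain, hlast⟩ := Cycle.chain_coe_cons_iff.1 hc.chain
    have hlen := hc.three_le_length
    simp only [Cycle.length_coe, List.length_cons] at hlen
    exact ⟨u, l, Cycle.nodup_coe_iff.1 hc.nodup, hc.toFinset_eq, hchain, hlast, by omega⟩
end

section
/- Every D3-reducible graph is minimally 3-vertex-connected: for every edge uv of a D3-reducible graph G, the graph G − uv obtained by deleting uv is not 3-vertex-connected. -/
namespace FinGraph

lemma adj_ne {G : FinGraph} {a b : ℕ} (h : G.Adj a b) : a ≠ b := by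
  rintro rfl; exact G.loopless a h

lemma nbrFinite (G : FinGraph) (w : ℕ) : (G.neighborSet w).Finite :=
  Set.Finite.subset G.verts.finite_toSet (fun z hz => (G.support w z hz).2)

lemma nbr_eq_of_degree_three {G : FinGraph} {w a b c : ℕ}
    (ha : G.Adj w a) (hb : G.Adj w b) (hc : G.Adj w c)
    (hab : a ≠ b) (hac : a ≠ c) (hbc : b ≠ c) (hdeg : G.degree w = 3) :
    G.neighborSet w = {a, b, c} := by
  have hsub : ({a, b, c} : Set ℕ) ⊆ G.neighborSet w := by
    intro z hz
    rcases hz with rfl | rfl | rfl <;> assumption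
  have hcard : ({a, b, c} : Set ℕ).ncard = 3 := by
    rw [Set.ncard_insert_of_notMem (by simp [hab, hac]) (Set.toFinite _),
        Set.ncard_pair hbc]
  exact (Set.eq_of_subset_of_ncard_le hsub (by rw [show (G.neighborSet w).ncard = 3 from hdeg, hcard]) (nbrFinite G w)).symm

lemma low_degree_not_threeConnected {G' : FinGraph} {w x y : ℕ}
    (hw : w ∈ G'.verts) (hwx : w ≠ x) (hwy : w ≠ y)
    (hnbr : ∀ z, G'.Adj w z → z = x ∨ z = y) : ¬ G'.ThreeConnected := by
  rintro ⟨hcard, hconn⟩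
  have hz : ∃ z ∈ G'.verts, z ≠ w ∧ z ≠ x ∧ z ≠ y := by
    by_contra hcon
    push_neg at hcon
    have : G'.verts ⊆ {w, x, y} := by
      intro z hz
      simp only [Finset.mem_insert, Finset.mem_singleton]
      by_contra h2; push_neg at h2
      exact h2.2.2 (hcon z hz h2.1 h2.2.1)
    have := Finset.card_le_card this
    have h3 : ({w, x, y} : Finset ℕ).card ≤ 3 :=
      Finset.card_insert_le _ _ |>.trans (by
        have := Finset.card_insert_le x ({y} : Finset ℕ); simp at this ⊢; omega)
    omega
  obtain ⟨z, hzv, hzw, hzx, hzy⟩ := hz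
  have hreach := hconn x y w (by simp [hw, hwx, hwy]) z (by simp [hzv, hzx, hzy])
  rcases hreach.cases_head with h | ⟨c, ⟨hadj, _, hcS⟩, _⟩
  · exact hzw h.symm
  · rcases hnbr c hadj with rfl | rfl <;> simp at hcS
lemma deg3_edge {G : FinGraph} {w u v : ℕ} (hdeg : G.degree w = 3)
    (huv : G.Adj u v) (hw : w = u ∨ w = v) :
    ¬ (G.deleteEdge u v).ThreeConnected := by
  obtain ⟨w', hww', hpat⟩ : ∃ w', G.Adj w w' ∧
      ((w = u ∧ w' = v) ∨ (w = v ∧ w' = u)) := by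
    rcases hw with rfl | rfl
    · exact ⟨v, huv, Or.inl ⟨rfl, rfl⟩⟩
    · exact ⟨u, G.symm _ _ huv, Or.inr ⟨rfl, rfl⟩⟩
  have hfin := nbrFinite G w
  have hmem : w' ∈ G.neighborSet w := hww'
  have hcard2 : (G.neighborSet w \ {w'}).ncard = 2 := by
    rw [Set.ncard_diff_singleton_of_mem hmem, show (G.neighborSet w).ncard = 3 from hdeg]
  obtain ⟨x, y, hxy, hset⟩ := Set.ncard_eq_two.1 hcard2
  have hxmem : x ∈ G.neighborSet w \ {w'} := by rw [hset]; simp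
  have hymem : y ∈ G.neighborSet w \ {w'} := by rw [hset]; simp
  apply low_degree_not_threeConnected (w := w) (x := x) (y := y)
  · exact (G.support w w' hww').1
  · rintro rfl; exact G.loopless w hxmem.1
  · rintro rfl; exact G.loopless w hymem.1
  · rintro z ⟨hz, hnp⟩
    have hzw' : z ≠ w' := by rintro rfl; exact hnp hpat
    have : z ∈ G.neighborSet w \ {w'} := ⟨hz, hzw'⟩
    rw [hset] at this
    exact this

lemma isK4_edge {G : FinGraph} (hK : G.IsK4) {u v : ℕ} (huv : G.Adj u v) :
    ¬ (G.deleteEdge u v).ThreeConnected := by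
  have hu := (G.support u v huv).1
  have hnbr : G.neighborSet u = ↑(G.verts.erase u) := by
    ext z
    simp only [neighborSet, Set.mem_setOf_eq, Finset.coe_erase, Set.mem_diff,
      Finset.mem_coe, Set.mem_singleton_iff]
    constructor
    · intro h; exact ⟨(G.support u z h).2, fun hz => G.loopless u (hz ▸ h)⟩
    · rintro ⟨hz, hne⟩; exact hK.2 u hu z hz (Ne.symm hne)
  have hdeg : G.degree u = 3 := by
    rw [degree, hnbr, Set.ncard_coe_finset, Finset.card_erase_of_mem hu, hK.1]
  exact deg3_edge hdeg huv (Or.inl rfl)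

lemma d3a_card {G H : FinGraph} (h : G.D3a H) : G.verts.card = H.verts.card + 2 := by
  obtain ⟨p, q, r, p', q', r', t, hcfg, ht, hverts, -⟩ := h
  obtain ⟨-, -, -, hpq, hqr, hpr, -⟩ := hcfg
  have hp : p ∈ G.verts := (G.support p q hpq).1
  have hq : q ∈ G.verts := (G.support q r hqr).1
  have hr : r ∈ G.verts := (G.support p r hpr).2
  have hpqn := adj_ne hpq; have hqrn := adj_ne hqr; have hprn := adj_ne hpr
  have h1 : ((G.verts \ {p, q, r}) ∪ {t}).card = (G.verts \ {p, q, r}).card + 1 := by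
    rw [Finset.union_comm, ← Finset.insert_eq, Finset.card_insert_of_notMem]
    simp only [Finset.mem_sdiff]
    rintro ⟨h1, -⟩; exact ht h1
  have h2 : (G.verts \ {p, q, r}).card = G.verts.card - 3 := by
    rw [Finset.card_sdiff_of_subset (by intro z hz; simp at hz; rcases hz with rfl|rfl|rfl <;> assumption)]
    congr 1
    rw [Finset.card_insert_of_notMem (by simp [hpqn, hprn]),
      Finset.card_insert_of_notMem (by simp [hqrn]), Finset.card_singleton]
  have h3 : 3 ≤ G.verts.card := by
    have : ({p, q, r} : Finset ℕ) ⊆ G.verts := by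
      intro z hz; simp at hz; rcases hz with rfl|rfl|rfl <;> assumption
    have := Finset.card_le_card this
    rw [Finset.card_insert_of_notMem (by simp [hpqn, hprn]),
      Finset.card_insert_of_notMem (by simp [hqrn]), Finset.card_singleton] at this
    exact this
  rw [hverts]; omega

lemma d3b_card {G H : FinGraph} (h : G.D3b H) : G.verts.card = H.verts.card + 1 := by
  obtain ⟨p, q, r, s, hcfg, hverts, -⟩ := h
  have hq : q ∈ G.verts := (G.support q r hcfg.2.2.2.2.1).1
  rw [hverts, Finset.sdiff_singleton_eq_erase, Finset.card_erase_of_mem hq]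
  have : 1 ≤ G.verts.card := Finset.card_pos.2 ⟨q, hq⟩
  omega

lemma card_ge_four {G : FinGraph} (h : G.D3Reducible) : 4 ≤ G.verts.card := by
  obtain ⟨H, hsteps, hK4⟩ := h
  induction hsteps using Relation.ReflTransGen.head_induction_on with
  | refl => exact hK4.1.ge
  | head step _ ih =>
    rcases step with h | h
    · rw [d3a_card h]; omega
    · rw [d3b_card h]; omega
section D3bLift

variable {G H : FinGraph} {p q r s u v : ℕ}

lemma d3b_pair (hcfg : G.D3bConfig p q r s)
    (hadj : ∀ a b, H.Adj a b ↔ (G.Adj a b ∧ a ≠ q ∧ b ≠ q) ∨ (a = p ∧ b = r) ∨ (a = r ∧ b = p))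
    (hup : u ∉ ({p, q, r} : Set ℕ)) (hvp : v ∉ ({p, q, r} : Set ℕ))
    {c d : ℕ} (hc : G.Adj q c) (hd : G.Adj q d) (hne : c ≠ d) :
    (H.deleteEdge u v).Adj c d := by
  obtain ⟨hdp, hdq, hdr, hpq, hqr, hnpr, hprne, hsp, hsq, hsr⟩ := hcfg
  have hnbrq : G.neighborSet q = {p, r, s} :=
    nbr_eq_of_degree_three (G.symm _ _ hpq) hqr (G.symm _ _ hsq) hprne
      (adj_ne hsp).symm (adj_ne hsr).symm hdq
  have hcm : c ∈ ({p, r, s} : Set ℕ) := hnbrq ▸ hc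
  have hdm : d ∈ ({p, r, s} : Set ℕ) := hnbrq ▸ hd
  have hpqne : p ≠ q := adj_ne hpq
  have hrqne : r ≠ q := (adj_ne hqr).symm
  have hsqne : s ≠ q := adj_ne hsq
  have hps : G.Adj p s := G.symm _ _ hsp
  have hrs : G.Adj r s := G.symm _ _ hsr
  simp only [Set.mem_insert_iff, Set.mem_singleton_iff] at hcm hdm hup hvp
  push_neg at hup hvp
  refine ⟨?_, ?_⟩
  · rw [hadj]
    rcases hcm with rfl | rfl | rfl <;> rcases hdm with rfl | rfl | rfl <;> tauto
  · rcases hcm with rfl | rfl | rfl <;> rcases hdm with rfl | rfl | rfl <;>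
      rintro (⟨rfl, rfl⟩ | ⟨rfl, rfl⟩) <;> tauto

lemma d3b_reach (hcfg : G.D3bConfig p q r s)
    (hadj : ∀ a b, H.Adj a b ↔ (G.Adj a b ∧ a ≠ q ∧ b ≠ q) ∨ (a = p ∧ b = r) ∨ (a = r ∧ b = p))
    (hup : u ∉ ({p, q, r} : Set ℕ)) (hvp : v ∉ ({p, q, r} : Set ℕ))
    (S : Set ℕ) {a : ℕ} (ha : a ≠ q) :
    ∀ b, (G.deleteEdge u v).ReachableWithin S a b →
      (b ≠ q → (H.deleteEdge u v).ReachableWithin (S \ {q}) a b) ∧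
      (b = q → ∃ c, c ∈ S ∧ c ≠ q ∧ G.Adj q c ∧
        (H.deleteEdge u v).ReachableWithin (S \ {q}) a c) := by
  intro b hb
  induction hb with
  | refl => exact ⟨fun _ => .refl, fun hbq => absurd hbq ha⟩
  | @tail c b hac hstep ih =>
    obtain ⟨hadjcb, hcS, hbS⟩ := hstep
    by_cases hcq : c = q
    · have hqb : G.Adj q b := hcq ▸ hadjcb.1
      have hbq : b ≠ q := fun h => adj_ne hadjcb.1 (hcq.trans h.symm)
      obtain ⟨c', hc'S, hc'q, hqc', hreach⟩ := ih.2 hcq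
      have hreachb : (H.deleteEdge u v).ReachableWithin (S \ {q}) a b := by
        rcases eq_or_ne c' b with rfl | hne
        · exact hreach
        · exact hreach.tail ⟨d3b_pair hcfg hadj hup hvp hqc' hqb hne,
            ⟨hc'S, hc'q⟩, ⟨hbS, hbq⟩⟩
      exact ⟨fun _ => hreachb, fun h => absurd h hbq⟩
    · have hh := ih.1 hcq
      constructor
      · intro hbq
        exact hh.tail ⟨⟨(hadj c b).2 (Or.inl ⟨hadjcb.1, hcq, hbq⟩), hadjcb.2⟩,
          ⟨hcS, hcq⟩, ⟨hbS, hbq⟩⟩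
      · intro hbq
        exact ⟨c, hcS, hcq, G.symm _ _ (hbq ▸ hadjcb.1), hh⟩

lemma d3b_lift (hd3b : G.D3b H)
    (hcard : 4 ≤ H.verts.card)
    (hIH : ∀ u v, H.Adj u v → ¬ (H.deleteEdge u v).ThreeConnected) :
    ∀ u v, G.Adj u v → ¬ (G.deleteEdge u v).ThreeConnected := by
  intro u v huv
  obtain ⟨p, q, r, s, hcfg, hverts, hadj⟩ := hd3b
  by_cases hu : u = p ∨ u = q ∨ u = r
  · rcases hu with rfl | rfl | rfl
    · exact deg3_edge hcfg.1 huv (Or.inl rfl)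
    · exact deg3_edge hcfg.2.1 huv (Or.inl rfl)
    · exact deg3_edge hcfg.2.2.1 huv (Or.inl rfl)
  by_cases hv : v = p ∨ v = q ∨ v = r
  · rcases hv with rfl | rfl | rfl
    · exact deg3_edge hcfg.1 huv (Or.inr rfl)
    · exact deg3_edge hcfg.2.1 huv (Or.inr rfl)
    · exact deg3_edge hcfg.2.2.1 huv (Or.inr rfl)
  push_neg at hu hv
  have hup : u ∉ ({p, q, r} : Set ℕ) := by
    simp only [Set.mem_insert_iff, Set.mem_singleton_iff]; push_neg; exact hu
  have hvp : v ∉ ({p, q, r} : Set ℕ) := by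
    simp only [Set.mem_insert_iff, Set.mem_singleton_iff]; push_neg; exact hv
  have hHuv : H.Adj u v := (hadj u v).2 (Or.inl ⟨huv, hu.2.1, hv.2.1⟩)
  rintro ⟨hc3, hconn⟩
  apply hIH u v hHuv
  constructor
  · show 3 < H.verts.card; omega
  · intro x y a ha b hb
    have hSeq : (↑H.verts : Set ℕ) \ {x, y} = ((↑G.verts : Set ℕ) \ {x, y}) \ {q} := by
      rw [hverts, Finset.coe_sdiff]
      ext z
      simp only [Set.mem_diff, Finset.mem_coe, Finset.coe_singleton, Set.mem_singleton_iff]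
      tauto
    have ha' : a ∈ ((↑G.verts : Set ℕ) \ {x, y}) \ {q} := hSeq ▸ (ha : a ∈ (↑H.verts : Set ℕ) \ {x, y})
    have hb' : b ∈ ((↑G.verts : Set ℕ) \ {x, y}) \ {q} := hSeq ▸ (hb : b ∈ (↑H.verts : Set ℕ) \ {x, y})
    have hreach : (G.deleteEdge u v).ReachableWithin (↑G.verts \ {x, y}) a b :=
      hconn x y a ha'.1 b hb'.1
    show (H.deleteEdge u v).ReachableWithin ((↑H.verts : Set ℕ) \ {x, y}) a b
    rw [hSeq]
    exact (d3b_reach hcfg hadj hup hvp _ ha'.2 b hreach).1 hb'.2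

end D3bLift
section D3aCore

/-- Core invariant lemma for a D3a reduction when the new vertex `t` belongs to the
deleted pair. Here `r` is the triangle vertex removed together with `y'`, and we
assume the reachability statuses of `p'` and `q'` (from `a` in `H - uv - {t,y'}`)
agree. -/
lemma d3a_core {G H : FinGraph} {u v p q r p' q' t y' a : ℕ}
    (hnp : G.neighborSet p = {q, r, p'}) (hnq : G.neighborSet q = {p, r, q'})
    (hH1 : ∀ c w, G.Adj c w → c ≠ p → c ≠ q → c ≠ r → w ≠ p → w ≠ q → w ≠ r → H.Adj c w)
    (hHv : ∀ w, w ∈ G.verts → w ≠ p → w ≠ q → w ≠ r → w ∈ H.verts)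
    (ht : t ∉ G.verts)
    (hap : a ≠ p) (haq : a ≠ q)
    (hiff : (H.deleteEdge u v).ReachableWithin (↑H.verts \ {t, y'}) a p' ↔
        (H.deleteEdge u v).ReachableWithin (↑H.verts \ {t, y'}) a q') :
    ∀ b, (G.deleteEdge u v).ReachableWithin (↑G.verts \ {r, y'}) a b →
      ((b = p ∨ b = q) →
        ((H.deleteEdge u v).ReachableWithin (↑H.verts \ {t, y'}) a p' ∧
         (H.deleteEdge u v).ReachableWithin (↑H.verts \ {t, y'}) a q')) ∧
      (b ≠ p → b ≠ q → (H.deleteEdge u v).ReachableWithin (↑H.verts \ {t, y'}) a b) := by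
  intro b hb
  induction hb with
  | refl =>
    refine ⟨?_, fun _ _ => .refl⟩
    rintro (rfl | rfl)
    · exact absurd rfl hap
    · exact absurd rfl haq
  | @tail c w hac hstep ih =>
    obtain ⟨⟨hGadj, hnpat⟩, hcS, hwS⟩ := hstep
    obtain ⟨hcG, hcry⟩ := hcS
    obtain ⟨hwG, hwry⟩ := hwS
    simp only [Set.mem_insert_iff, Set.mem_singleton_iff, not_or] at hcry hwry
    obtain ⟨hcr, hcy⟩ := hcry
    obtain ⟨hwr, hwy⟩ := hwry
    -- membership transfer to H-side
    have memH : ∀ z, z ∈ G.verts → z ≠ p → z ≠ q → z ≠ r → z ≠ y' →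
        z ∈ ((↑H.verts : Set ℕ) \ {t, y'}) := by
      intro z hz h1 h2 h3 h4
      refine ⟨hHv z hz h1 h2 h3, ?_⟩
      simp only [Set.mem_insert_iff, Set.mem_singleton_iff, not_or]
      exact ⟨fun h => ht (h ▸ hz), h4⟩
    by_cases hcpq : c = p ∨ c = q
    · by_cases hwpq : w = p ∨ w = q
      · exact ⟨fun _ => ih.1 hcpq, fun h1 h2 => absurd hwpq (by tauto)⟩
      · push_neg at hwpq
        -- exit from the blob: w is the prime of c
        have hRw : (H.deleteEdge u v).ReachableWithin (↑H.verts \ {t, y'}) a w := by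
          rcases hcpq with rfl | rfl
          · have hwmem : w ∈ G.neighborSet c := hGadj
            rw [hnp] at hwmem
            rcases hwmem with rfl | rfl | rfl
            · exact absurd rfl hwpq.2
            · exact absurd rfl hwr
            · exact (ih.1 (Or.inl rfl)).1
          · have hwmem : w ∈ G.neighborSet c := hGadj
            rw [hnq] at hwmem
            rcases hwmem with rfl | rfl | rfl
            · exact absurd rfl hwpq.1
            · exact absurd rfl hwr
            · exact (ih.1 (Or.inr rfl)).2
        exact ⟨fun h => absurd h (by tauto), fun _ _ => hRw⟩
    · push_neg at hcpq
      have hRc := ih.2 hcpq.1 hcpq.2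
      by_cases hwpq : w = p ∨ w = q
      · -- entering the blob: c is the prime of w
        have hboth : (H.deleteEdge u v).ReachableWithin (↑H.verts \ {t, y'}) a p' ∧
            (H.deleteEdge u v).ReachableWithin (↑H.verts \ {t, y'}) a q' := by
          rcases hwpq with rfl | rfl
          · have hcmem : c ∈ G.neighborSet w := G.symm _ _ hGadj
            rw [hnp] at hcmem
            rcases hcmem with rfl | rfl | rfl
            · exact absurd rfl hcpq.2
            · exact absurd rfl hcr
            · exact ⟨hRc, hiff.1 hRc⟩
          · have hcmem : c ∈ G.neighborSet w := G.symm _ _ hGadj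
            rw [hnq] at hcmem
            rcases hcmem with rfl | rfl | rfl
            · exact absurd rfl hcpq.1
            · exact absurd rfl hcr
            · exact ⟨hiff.2 hRc, hRc⟩
        exact ⟨fun _ => hboth, fun h1 h2 => absurd hwpq (by tauto)⟩
      · push_neg at hwpq
        have hstep' : (H.deleteEdge u v).Adj c w :=
          ⟨hH1 c w hGadj hcpq.1 hcpq.2 hcr hwpq.1 hwpq.2 hwr, hnpat⟩
        refine ⟨fun h => absurd h (by tauto), fun _ _ => ?_⟩
        exact hRc.tail ⟨hstep', memH c hcG hcpq.1 hcpq.2 hcr hcy,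
          memH w hwG hwpq.1 hwpq.2 hwr hwy⟩

end D3aCore
section D3aLift

/-- Mapping lemma for D3a when `t` is not among the deleted pair `{x,y}`:
walks in `G - uv` project to walks in `H - uv` by collapsing the triangle to `t`. -/
lemma d3a_mapA {G H : FinGraph} {u v p q r p' q' r' t x y : ℕ}
    (hnp : G.neighborSet p = {q, r, p'}) (hnq : G.neighborSet q = {p, r, q'})
    (hnr : G.neighborSet r = {p, q, r'})
    (hH1 : ∀ c w, G.Adj c w → c ≠ p → c ≠ q → c ≠ r → w ≠ p → w ≠ q → w ≠ r → H.Adj c w)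
    (hHv : ∀ w, w ∈ G.verts → w ≠ p → w ≠ q → w ≠ r → w ∈ H.verts)
    (ht : t ∉ G.verts) (htH : t ∈ H.verts)
    (hadjt : ∀ c, c = p' ∨ c = q' ∨ c = r' → H.Adj c t)
    (hu : u ∈ G.verts) (hv : v ∈ G.verts)
    (htx : t ≠ x) (hty : t ≠ y) :
    ∀ a b, (G.deleteEdge u v).ReachableWithin (↑G.verts \ {x, y}) a b →
      (H.deleteEdge u v).ReachableWithin (↑H.verts \ {x, y})
        (if a = p ∨ a = q ∨ a = r then t else a)
        (if b = p ∨ b = q ∨ b = r then t else b) := by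
  have hpatt : ∀ z : ℕ, ¬((t = u ∧ z = v) ∨ (t = v ∧ z = u)) := by
    rintro z (⟨h, -⟩ | ⟨h, -⟩)
    · exact ht (h ▸ hu)
    · exact ht (h ▸ hv)
  have hpatt' : ∀ z : ℕ, ¬((z = u ∧ t = v) ∨ (z = v ∧ t = u)) := by
    rintro z (⟨-, h⟩ | ⟨-, h⟩)
    · exact ht (h ▸ hv)
    · exact ht (h ▸ hu)
  have memH : ∀ z, z ∈ G.verts → ¬(z = p ∨ z = q ∨ z = r) → z ≠ x → z ≠ y →
      z ∈ ((↑H.verts : Set ℕ) \ {x, y}) := by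
    intro z hz h1 h2 h3
    push_neg at h1
    refine ⟨hHv z hz h1.1 h1.2.1 h1.2.2, ?_⟩
    simp only [Set.mem_insert_iff, Set.mem_singleton_iff, not_or]
    exact ⟨h2, h3⟩
  have htS : t ∈ ((↑H.verts : Set ℕ) \ {x, y}) := by
    refine ⟨htH, ?_⟩
    simp only [Set.mem_insert_iff, Set.mem_singleton_iff, not_or]
    exact ⟨htx, hty⟩
  intro a b hab
  induction hab with
  | refl => exact .refl
  | @tail c w hac hstep ih =>
    obtain ⟨⟨hGadj, hnpat⟩, hcS, hwS⟩ := hstep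
    obtain ⟨hcG, hcxy⟩ := hcS
    obtain ⟨hwG, hwxy⟩ := hwS
    simp only [Set.mem_insert_iff, Set.mem_singleton_iff, not_or] at hcxy hwxy
    by_cases hc : c = p ∨ c = q ∨ c = r <;> by_cases hw : w = p ∨ w = q ∨ w = r
    · rw [if_pos hw]; rw [if_pos hc] at ih; exact ih
    · -- exit the blob: w is the prime of the blob vertex c
      rw [if_neg hw]; rw [if_pos hc] at ih
      have hwprime : w = p' ∨ w = q' ∨ w = r' := by
        push_neg at hw
        rcases hc with rfl | rfl | rfl
        · have : w ∈ G.neighborSet c := hGadj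
          rw [hnp] at this
          rcases this with rfl | rfl | rfl
          · exact absurd rfl hw.2.1
          · exact absurd rfl hw.2.2
          · exact Or.inl rfl
        · have : w ∈ G.neighborSet c := hGadj
          rw [hnq] at this
          rcases this with rfl | rfl | rfl
          · exact absurd rfl hw.1
          · exact absurd rfl hw.2.2
          · exact Or.inr (Or.inl rfl)
        · have : w ∈ G.neighborSet c := hGadj
          rw [hnr] at this
          rcases this with rfl | rfl | rfl
          · exact absurd rfl hw.1
          · exact absurd rfl hw.2.1
          · exact Or.inr (Or.inr rfl)
      exact ih.tail ⟨⟨H.symm _ _ (hadjt w hwprime), hpatt w⟩, htS,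
        memH w hwG hw hwxy.1 hwxy.2⟩
    · -- enter the blob: c is the prime of the blob vertex w
      rw [if_pos hw]; rw [if_neg hc] at ih
      have hcprime : c = p' ∨ c = q' ∨ c = r' := by
        push_neg at hc
        rcases hw with rfl | rfl | rfl
        · have : c ∈ G.neighborSet w := G.symm _ _ hGadj
          rw [hnp] at this
          rcases this with rfl | rfl | rfl
          · exact absurd rfl hc.2.1
          · exact absurd rfl hc.2.2
          · exact Or.inl rfl
        · have : c ∈ G.neighborSet w := G.symm _ _ hGadj
          rw [hnq] at this
          rcases this with rfl | rfl | rfl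
          · exact absurd rfl hc.1
          · exact absurd rfl hc.2.2
          · exact Or.inr (Or.inl rfl)
        · have : c ∈ G.neighborSet w := G.symm _ _ hGadj
          rw [hnr] at this
          rcases this with rfl | rfl | rfl
          · exact absurd rfl hc.1
          · exact absurd rfl hc.2.1
          · exact Or.inr (Or.inr rfl)
      exact ih.tail ⟨⟨hadjt c hcprime, hpatt' c⟩,
        memH c hcG hc hcxy.1 hcxy.2, htS⟩
    · rw [if_neg hw]; rw [if_neg hc] at ih
      push_neg at hc hw
      exact ih.tail ⟨⟨hH1 c w hGadj hc.1 hc.2.1 hc.2.2 hw.1 hw.2.1 hw.2.2, hnpat⟩,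
        memH c hcG (by push_neg; exact hc) hcxy.1 hcxy.2,
        memH w hwG (by push_neg; exact hw) hwxy.1 hwxy.2⟩

end D3aLift
section D3aCaseB

lemma d3a_caseB {G H : FinGraph} {u v p q r p' q' r' t y' : ℕ}
    (hcfg : G.D3aConfig p q r p' q' r')
    (ht : t ∉ G.verts)
    (hverts : H.verts = (G.verts \ {p, q, r}) ∪ {t})
    (hadj : ∀ a b, H.Adj a b ↔
      (G.Adj a b ∧ a ∉ ({p, q, r} : Set ℕ) ∧ b ∉ ({p, q, r} : Set ℕ)) ∨
      (a = t ∧ b ∈ ({p', q', r'} : Set ℕ)) ∨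
      (b = t ∧ a ∈ ({p', q', r'} : Set ℕ)))
    (hconnG : ∀ z w, (G.deleteEdge u v).ConnectedOn (↑G.verts \ {z, w}))
    (a b : ℕ) (ha : a ∈ (↑H.verts : Set ℕ) \ {t, y'})
    (hb : b ∈ (↑H.verts : Set ℕ) \ {t, y'}) :
    (H.deleteEdge u v).ReachableWithin (↑H.verts \ {t, y'}) a b := by
  obtain ⟨dp, dq, dr, hpq, hqr, hpr, hpp', hqq', hrr', hp'n, hq'n, hr'n, h12, h13, h23⟩ := hcfg
  simp only [Set.mem_insert_iff, Set.mem_singleton_iff, not_or] at hp'n hq'n hr'n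
  have hpqn : p ≠ q := adj_ne hpq
  have hqrn : q ≠ r := adj_ne hqr
  have hprn : p ≠ r := adj_ne hpr
  have hH1 : ∀ c w, G.Adj c w → c ≠ p → c ≠ q → c ≠ r → w ≠ p → w ≠ q → w ≠ r →
      H.Adj c w := by
    intro c w h h1 h2 h3 h4 h5 h6
    refine (hadj c w).2 (Or.inl ⟨h, ?_, ?_⟩) <;>
      simp only [Set.mem_insert_iff, Set.mem_singleton_iff, not_or] <;> tauto
  have hHv : ∀ w, w ∈ G.verts → w ≠ p → w ≠ q → w ≠ r → w ∈ H.verts := by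
    intro w hw h1 h2 h3
    rw [hverts]
    exact Finset.mem_union_left _ (Finset.mem_sdiff.2 ⟨hw, by simp [h1, h2, h3]⟩)
  have hmemG : ∀ z, z ∈ (↑H.verts : Set ℕ) \ {t, y'} →
      z ∈ G.verts ∧ z ≠ p ∧ z ≠ q ∧ z ≠ r ∧ z ≠ y' := by
    intro z hz
    obtain ⟨hzH, hzty⟩ := hz
    simp only [Set.mem_insert_iff, Set.mem_singleton_iff, not_or] at hzty
    rw [hverts, Finset.mem_coe, Finset.mem_union] at hzH
    rcases hzH with hzH | hzH
    · rw [Finset.mem_sdiff] at hzH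
      have := hzH.2
      simp only [Finset.mem_insert, Finset.mem_singleton, not_or] at this
      exact ⟨hzH.1, this.1, this.2.1, this.2.2, hzty.2⟩
    · rw [Finset.mem_singleton] at hzH
      exact absurd hzH hzty.1
  obtain ⟨haG, hap, haq, har, hay⟩ := hmemG a ha
  obtain ⟨hbG, hbp, hbq, hbr, hby⟩ := hmemG b hb
  have hreach : ∀ z : ℕ, z = p ∨ z = q ∨ z = r →
      (G.deleteEdge u v).ReachableWithin (↑G.verts \ {z, y'}) a b := by
    intro z hz
    refine hconnG z y' a ⟨haG, ?_⟩ b ⟨hbG, ?_⟩ <;>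
      simp only [Set.mem_insert_iff, Set.mem_singleton_iff, not_or] <;>
      rcases hz with rfl | rfl | rfl <;> tauto
  -- the six neighbor-set computations
  have hnp : G.neighborSet p = {q, r, p'} :=
    nbr_eq_of_degree_three hpq hpr hpp' hqrn (Ne.symm hp'n.2.1) (Ne.symm hp'n.2.2) dp
  have hnq : G.neighborSet q = {p, r, q'} :=
    nbr_eq_of_degree_three (G.symm _ _ hpq) hqr hqq' hprn (Ne.symm hq'n.1) (Ne.symm hq'n.2.2) dq
  have hnr : G.neighborSet r = {p, q, r'} :=
    nbr_eq_of_degree_three (G.symm _ _ hpr) (G.symm _ _ hqr) hrr' hpqn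
      (Ne.symm hr'n.1) (Ne.symm hr'n.2.1) dr
  have hnp2 : G.neighborSet p = {r, q, p'} :=
    nbr_eq_of_degree_three hpr hpq hpp' (Ne.symm hqrn) (Ne.symm hp'n.2.2) (Ne.symm hp'n.2.1) dp
  have hnq2 : G.neighborSet q = {r, p, q'} :=
    nbr_eq_of_degree_three hqr (G.symm _ _ hpq) hqq' (Ne.symm hprn)
      (Ne.symm hq'n.2.2) (Ne.symm hq'n.1) dq
  have hnr2 : G.neighborSet r = {q, p, r'} :=
    nbr_eq_of_degree_three (G.symm _ _ hqr) (G.symm _ _ hpr) hrr' (Ne.symm hpqn)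
      (Ne.symm hr'n.2.1) (Ne.symm hr'n.1) dr
  by_cases hRp : (H.deleteEdge u v).ReachableWithin (↑H.verts \ {t, y'}) a p' <;>
    by_cases hRq : (H.deleteEdge u v).ReachableWithin (↑H.verts \ {t, y'}) a q'
  · exact (d3a_core hnp hnq hH1 hHv ht hap haq (iff_of_true hRp hRq) b
      (hreach r (Or.inr (Or.inr rfl)))).2 hbp hbq
  · by_cases hRr : (H.deleteEdge u v).ReachableWithin (↑H.verts \ {t, y'}) a r'
    · -- remove q; blob p,r with primes p',r'
      exact (d3a_core hnp2 hnr
        (fun c w h h1 h2 h3 h4 h5 h6 => hH1 c w h h1 h3 h2 h4 h6 h5)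
        (fun w hw h1 h2 h3 => hHv w hw h1 h3 h2)
        ht hap har (iff_of_true hRp hRr) b (hreach q (Or.inr (Or.inl rfl)))).2 hbp hbr
    · -- remove p; blob q,r with primes q',r'
      exact (d3a_core hnq2 hnr2
        (fun c w h h1 h2 h3 h4 h5 h6 => hH1 c w h h3 h1 h2 h6 h4 h5)
        (fun w hw h1 h2 h3 => hHv w hw h3 h1 h2)
        ht haq har (iff_of_false hRq hRr) b (hreach p (Or.inl rfl))).2 hbq hbr
  · by_cases hRr : (H.deleteEdge u v).ReachableWithin (↑H.verts \ {t, y'}) a r'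
    · -- remove p; blob q,r with primes q',r'
      exact (d3a_core hnq2 hnr2
        (fun c w h h1 h2 h3 h4 h5 h6 => hH1 c w h h3 h1 h2 h6 h4 h5)
        (fun w hw h1 h2 h3 => hHv w hw h3 h1 h2)
        ht haq har (iff_of_true hRq hRr) b (hreach p (Or.inl rfl))).2 hbq hbr
    · -- remove q; blob p,r with primes p',r'
      exact (d3a_core hnp2 hnr
        (fun c w h h1 h2 h3 h4 h5 h6 => hH1 c w h h1 h3 h2 h4 h6 h5)
        (fun w hw h1 h2 h3 => hHv w hw h1 h3 h2)
        ht hap har (iff_of_false hRp hRr) b (hreach q (Or.inr (Or.inl rfl)))).2 hbp hbr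
  · exact (d3a_core hnp hnq hH1 hHv ht hap haq (iff_of_false hRp hRq) b
      (hreach r (Or.inr (Or.inr rfl)))).2 hbp hbq

end D3aCaseB
lemma d3a_caseA {G H : FinGraph} {u v p q r p' q' r' t x y : ℕ}
    (hnp : G.neighborSet p = {q, r, p'}) (hnq : G.neighborSet q = {p, r, q'})
    (hnr : G.neighborSet r = {p, q, r'})
    (hH1 : ∀ c w, G.Adj c w → c ≠ p → c ≠ q → c ≠ r → w ≠ p → w ≠ q → w ≠ r → H.Adj c w)
    (hHv : ∀ w, w ∈ G.verts → w ≠ p → w ≠ q → w ≠ r → w ∈ H.verts)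
    (hverts : H.verts = (G.verts \ {p, q, r}) ∪ {t})
    (ht : t ∉ G.verts) (htH : t ∈ H.verts)
    (hadjt : ∀ c, c = p' ∨ c = q' ∨ c = r' → H.Adj c t)
    (hp'G : p' ∈ G.verts) (hq'G : q' ∈ G.verts) (hr'G : r' ∈ G.verts)
    (hp'n : p' ≠ p ∧ p' ≠ q ∧ p' ≠ r) (hq'n : q' ≠ p ∧ q' ≠ q ∧ q' ≠ r)
    (hr'n : r' ≠ p ∧ r' ≠ q ∧ r' ≠ r)
    (h12 : p' ≠ q') (h13 : p' ≠ r') (h23 : q' ≠ r')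
    (huG : u ∈ G.verts) (hvG : v ∈ G.verts)
    (htx : t ≠ x) (hty : t ≠ y)
    (hconnG : ∀ z w, (G.deleteEdge u v).ConnectedOn (↑G.verts \ {z, w}))
    (a b : ℕ) (ha' : a ∈ (↑H.verts : Set ℕ) \ {x, y})
    (hb' : b ∈ (↑H.verts : Set ℕ) \ {x, y}) :
    (H.deleteEdge u v).ReachableWithin ((↑H.verts : Set ℕ) \ {x, y}) a b := by
  have hmemG : ∀ z, z ∈ (↑H.verts : Set ℕ) \ {x, y} → z ≠ t →
      z ∈ ((↑G.verts : Set ℕ) \ {x, y}) ∧ z ≠ p ∧ z ≠ q ∧ z ≠ r := by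
    intro z hz hzt
    obtain ⟨hzH, hzxy⟩ := hz
    rw [hverts, Finset.mem_coe, Finset.mem_union] at hzH
    rcases hzH with hzH | hzH
    · rw [Finset.mem_sdiff] at hzH
      have := hzH.2
      simp only [Finset.mem_insert, Finset.mem_singleton, not_or] at this
      exact ⟨⟨hzH.1, hzxy⟩, this⟩
    · rw [Finset.mem_singleton] at hzH
      exact absurd hzH hzt
  -- a prime avoiding x and y
  obtain ⟨π, hπ1, hπx, hπy⟩ : ∃ π, (π = p' ∨ π = q' ∨ π = r') ∧ π ≠ x ∧ π ≠ y := by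
    by_cases h1 : p' ≠ x ∧ p' ≠ y
    · exact ⟨p', Or.inl rfl, h1⟩
    by_cases h2 : q' ≠ x ∧ q' ≠ y
    · exact ⟨q', Or.inr (Or.inl rfl), h2⟩
    · refine ⟨r', Or.inr (Or.inr rfl), ?_⟩
      push_neg at h1 h2
      constructor <;> omega
  have hπG : π ∈ G.verts := by rcases hπ1 with rfl | rfl | rfl <;> assumption
  have hπpqr : π ≠ p ∧ π ≠ q ∧ π ≠ r := by
    rcases hπ1 with rfl | rfl | rfl
    exacts [hp'n, hq'n, hr'n]
  have hπS : π ∈ (↑H.verts : Set ℕ) \ {x, y} := by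
    refine ⟨hHv π hπG hπpqr.1 hπpqr.2.1 hπpqr.2.2, ?_⟩
    simp only [Set.mem_insert_iff, Set.mem_singleton_iff, not_or]
    exact ⟨hπx, hπy⟩
  have hπSG : π ∈ ((↑G.verts : Set ℕ) \ {x, y}) := by
    refine ⟨hπG, ?_⟩
    simp only [Set.mem_insert_iff, Set.mem_singleton_iff, not_or]
    exact ⟨hπx, hπy⟩
  have hmap := d3a_mapA hnp hnq hnr hH1 hHv ht htH hadjt huG hvG
    htx hty
  have hpatt : ∀ z : ℕ, ¬((t = u ∧ z = v) ∨ (t = v ∧ z = u)) := by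
    rintro z (⟨h, -⟩ | ⟨h, -⟩)
    · exact ht (h ▸ huG)
    · exact ht (h ▸ hvG)
  have hpatt' : ∀ z : ℕ, ¬((z = u ∧ t = v) ∨ (z = v ∧ t = u)) := by
    rintro z (⟨-, h⟩ | ⟨-, h⟩)
    · exact ht (h ▸ hvG)
    · exact ht (h ▸ huG)
  have hmap' : ∀ c d, c ∈ (↑H.verts : Set ℕ) \ {x, y} → d ∈ (↑H.verts : Set ℕ) \ {x, y} →
      c ≠ t → d ≠ t → (H.deleteEdge u v).ReachableWithin ((↑H.verts : Set ℕ) \ {x, y}) c d := by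
    intro c d hc hd hct hdt
    obtain ⟨hcSG, hcp, hcq, hcr⟩ := hmemG c hc hct
    obtain ⟨hdSG, hdp, hdq, hdr⟩ := hmemG d hd hdt
    have := hmap c d (hconnG x y c hcSG d hdSG)
    rwa [if_neg (show ¬(c = p ∨ c = q ∨ c = r) by push_neg; exact ⟨hcp, hcq, hcr⟩),
      if_neg (show ¬(d = p ∨ d = q ∨ d = r) by push_neg; exact ⟨hdp, hdq, hdr⟩)] at this
  by_cases hat : a = t <;> by_cases hbt : b = t
  · subst hat; subst hbt; exact .refl
  · subst hat
    refine Relation.ReflTransGen.head ⟨⟨H.symm _ _ (hadjt π hπ1), hpatt π⟩, ha', hπS⟩ ?_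
    exact hmap' π b hπS hb' (fun h => ht (h ▸ hπG)) hbt
  · subst hbt
    refine Relation.ReflTransGen.tail ?_ ⟨⟨hadjt π hπ1, hpatt' π⟩, hπS, hb'⟩
    exact hmap' a π ha' hπS hat (fun h => ht (h ▸ hπG))
  · exact hmap' a b ha' hb' hat hbt

set_option maxHeartbeats 1000000 in
lemma d3a_lift {G H : FinGraph} (hd3a : G.D3a H)
    (hcard : 4 ≤ H.verts.card)
    (hIH : ∀ u v, H.Adj u v → ¬ (H.deleteEdge u v).ThreeConnected) :
    ∀ u v, G.Adj u v → ¬ (G.deleteEdge u v).ThreeConnected := by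
  intro u v huv
  obtain ⟨p, q, r, p', q', r', t, hcfg, ht, hverts, hadj⟩ := hd3a
  by_cases hu : u = p ∨ u = q ∨ u = r
  · rcases hu with rfl | rfl | rfl
    · exact deg3_edge hcfg.1 huv (Or.inl rfl)
    · exact deg3_edge hcfg.2.1 huv (Or.inl rfl)
    · exact deg3_edge hcfg.2.2.1 huv (Or.inl rfl)
  by_cases hv : v = p ∨ v = q ∨ v = r
  · rcases hv with rfl | rfl | rfl
    · exact deg3_edge hcfg.1 huv (Or.inr rfl)
    · exact deg3_edge hcfg.2.1 huv (Or.inr rfl)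
    · exact deg3_edge hcfg.2.2.1 huv (Or.inr rfl)
  push_neg at hu hv
  obtain ⟨dp, dq, dr, hpq, hqr, hpr, hpp', hqq', hrr', hp'n, hq'n, hr'n, h12, h13, h23⟩ := hcfg
  have hcfg' : G.D3aConfig p q r p' q' r' :=
    ⟨dp, dq, dr, hpq, hqr, hpr, hpp', hqq', hrr', hp'n, hq'n, hr'n, h12, h13, h23⟩
  simp only [Set.mem_insert_iff, Set.mem_singleton_iff, not_or] at hp'n hq'n hr'n
  have hpqn : p ≠ q := adj_ne hpq
  have hqrn : q ≠ r := adj_ne hqr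
  have hprn : p ≠ r := adj_ne hpr
  have huG : u ∈ G.verts := (G.support u v huv).1
  have hvG : v ∈ G.verts := (G.support u v huv).2
  have hp'G : p' ∈ G.verts := (G.support p p' hpp').2
  have hq'G : q' ∈ G.verts := (G.support q q' hqq').2
  have hr'G : r' ∈ G.verts := (G.support r r' hrr').2
  have htH : t ∈ H.verts := by
    rw [hverts]; exact Finset.mem_union_right _ (Finset.mem_singleton_self t)
  have hHuv : H.Adj u v := (hadj u v).2 (Or.inl ⟨huv, by
      simp only [Set.mem_insert_iff, Set.mem_singleton_iff, not_or]; exact hu, by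
      simp only [Set.mem_insert_iff, Set.mem_singleton_iff, not_or]; exact hv⟩)
  have hH1 : ∀ c w, G.Adj c w → c ≠ p → c ≠ q → c ≠ r → w ≠ p → w ≠ q → w ≠ r →
      H.Adj c w := by
    intro c w h h1 h2 h3 h4 h5 h6
    refine (hadj c w).2 (Or.inl ⟨h, ?_, ?_⟩) <;>
      simp only [Set.mem_insert_iff, Set.mem_singleton_iff, not_or] <;> tauto
  have hHv : ∀ w, w ∈ G.verts → w ≠ p → w ≠ q → w ≠ r → w ∈ H.verts := by
    intro w hw h1 h2 h3
    rw [hverts]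
    exact Finset.mem_union_left _ (Finset.mem_sdiff.2 ⟨hw, by simp [h1, h2, h3]⟩)
  have hadjt : ∀ c, c = p' ∨ c = q' ∨ c = r' → H.Adj c t := by
    intro c hc
    refine (hadj c t).2 (Or.inr (Or.inr ⟨rfl, ?_⟩))
    simpa only [Set.mem_insert_iff, Set.mem_singleton_iff] using hc
  have hnp : G.neighborSet p = {q, r, p'} :=
    nbr_eq_of_degree_three hpq hpr hpp' hqrn (Ne.symm hp'n.2.1) (Ne.symm hp'n.2.2) dp
  have hnq : G.neighborSet q = {p, r, q'} :=
    nbr_eq_of_degree_three (G.symm _ _ hpq) hqr hqq' hprn (Ne.symm hq'n.1) (Ne.symm hq'n.2.2) dq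
  have hnr : G.neighborSet r = {p, q, r'} :=
    nbr_eq_of_degree_three (G.symm _ _ hpr) (G.symm _ _ hqr) hrr' hpqn
      (Ne.symm hr'n.1) (Ne.symm hr'n.2.1) dr
  rintro ⟨hc3, hconn⟩
  apply hIH u v hHuv
  refine ⟨by show 3 < H.verts.card; omega, ?_⟩
  intro x y a ha b hb
  have ha' : a ∈ (↑H.verts : Set ℕ) \ {x, y} := ha
  have hb' : b ∈ (↑H.verts : Set ℕ) \ {x, y} := hb
  have hconnG : ∀ z w, (G.deleteEdge u v).ConnectedOn (↑G.verts \ {z, w}) :=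
    fun z w => hconn z w
  show (H.deleteEdge u v).ReachableWithin ((↑H.verts : Set ℕ) \ {x, y}) a b
  by_cases hxt : x = t
  · rw [hxt] at ha' hb' ⊢
    exact d3a_caseB hcfg' ht hverts hadj hconnG a b ha' hb'
  by_cases hyt : y = t
  · rw [hyt, Set.pair_comm x t] at ha' hb' ⊢
    exact d3a_caseB hcfg' ht hverts hadj hconnG a b ha' hb'
  exact d3a_caseA hnp hnq hnr hH1 hHv hverts ht htH hadjt hp'G hq'G hr'G hp'n hq'n hr'n
    h12 h13 h23 huG hvG (Ne.symm hxt) (Ne.symm hyt) hconnG a b ha' hb'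
end FinGraph
theorem d3_reducible_minimally_three_connected (G : FinGraph) (h : G.D3Reducible)
    (u v : ℕ) (huv : G.Adj u v) :
    ¬ (G.deleteEdge u v).ThreeConnected := by
  obtain ⟨K, hsteps, hK4⟩ := h
  suffices hP : ∀ u v, G.Adj u v → ¬ (G.deleteEdge u v).ThreeConnected from hP u v huv
  clear huv
  induction hsteps using Relation.ReflTransGen.head_induction_on with
  | refl => exact fun u v huv => FinGraph.isK4_edge hK4 huv
  | head step rest ih =>
    have hc4 := FinGraph.card_ge_four ⟨K, rest, hK4⟩
    rcases step with hstep | hstep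
    · exact FinGraph.d3a_lift hstep hc4 ih
    · exact FinGraph.d3b_lift hstep hc4 ih
end

section
/- In a Halin graph G formed from tree T and leaf cycle C, every D3a reduction collapses a triangle consisting of two leaf children of a tree vertex whose only children are those two leaves, together with that parent vertex; and every D3b reduction removes a leaf that is the middle one of three consecutive leaf children of its parent on the cycle C. -/
theorem Relation.ReflTransGen.mem_of_closed {α : Type*} {r : α → α → Prop} {s : Set α}
    {a b : α} (h : Relation.ReflTransGen r a b) (hs : ∀ x ∈ s, ∀ y, r x y → y ∈ s)
    (ha : a ∈ s) : b ∈ s := by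
  induction h with
  | refl => exact ha
  | tail _ hxy ih => exact hs _ ih _ hxy

theorem Set.eq_or_eq_of_ncard_eq_two {α : Type*} {s : Set α} {a b x : α} (hs : s.ncard = 2)
    (ha : a ∈ s) (hb : b ∈ s) (hab : a ≠ b) (hx : x ∈ s) : x = a ∨ x = b := by
  obtain ⟨u, v, -, rfl⟩ := Set.ncard_eq_two.mp hs
  simp only [Set.mem_insert_iff, Set.mem_singleton_iff] at ha hb hx
  grind

theorem Set.exists_ne_of_three_le_ncard {α : Type*} {s : Set α} {P : α → Prop}
    (hs : 3 ≤ s.ncard) (h : ∀ x ∈ s, ∀ y ∈ s, ¬ P x → ¬ P y → x = y) :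
    ∃ x ∈ s, ∃ y ∈ s, x ≠ y ∧ P x ∧ P y := by
  obtain ⟨a, b, c, ha, hb, hc, hab, hac, hbc⟩ :=
    (Set.two_lt_ncard_iff (Set.finite_of_ncard_pos (by omega))).mp hs
  by_cases hPa : P a <;> by_cases hPb : P b <;> by_cases hPc : P c
  all_goals first
    | exact ⟨a, ha, b, hb, hab, hPa, hPb⟩
    | exact ⟨a, ha, c, hc, hac, hPa, hPc⟩
    | exact ⟨b, hb, c, hc, hbc, hPb, hPc⟩
    | grind

theorem SimpleGraph.IsAcyclic.exists_ne_existsUnique_adj {V : Type*} [Finite V]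
    {G : SimpleGraph V} (hG : G.IsAcyclic) {u w : V} (huw : G.Adj u w) :
    ∃ v₁ v₂, v₁ ≠ v₂ ∧ (∃! y, G.Adj v₁ y) ∧ (∃! y, G.Adj v₂ y) := by
  classical
  let c := G.connectedComponentMk u
  have hw : w ∈ c.supp := SimpleGraph.ConnectedComponent.connectedComponentMk_eq_of_adj huw.symm
  have : Fintype c.supp := Fintype.ofFinite _
  have : Nontrivial c.supp := ⟨⟨⟨u, rfl⟩, ⟨w, hw⟩, fun h => huw.ne (congrArg Subtype.val h)⟩⟩
  obtain ⟨a, b, hab, ha, hb⟩ := (hG.isTree_connectedComponent c).exists_ne_and_degree_eq_one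
  have unique_adj : ∀ x : c.supp, c.toSimpleGraph.degree x = 1 → ∃! y, G.Adj x y := by
    intro x hx
    obtain ⟨y, hy, huniq⟩ := SimpleGraph.degree_eq_one_iff_existsUnique_adj.mp hx
    refine ⟨y, hy, fun z hz => ?_⟩
    have hzc : z ∈ c.supp :=
      (SimpleGraph.ConnectedComponent.connectedComponentMk_eq_of_adj hz).symm.trans x.2
    exact congrArg Subtype.val (huniq ⟨z, hzc⟩ hz)
  exact ⟨a, b, fun h => hab (Subtype.ext h), unique_adj a ha, unique_adj b hb⟩

namespace FinGraph

variable {G T : FinGraph} {a b c u v p q r s p' q' r' : ℕ}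

theorem Adj.ne (h : G.Adj u v) : u ≠ v :=
  fun e => G.loopless v (e ▸ h)

theorem finite_neighborSet (G : FinGraph) (v : ℕ) : (G.neighborSet v).Finite :=
  G.verts.finite_toSet.subset fun _ hu => (G.support v _ hu).2

def toSimpleGraph (G : FinGraph) : SimpleGraph ℕ where
  Adj := G.Adj
  symm := ⟨G.symm⟩
  loopless := ⟨G.loopless⟩

theorem IsLeaf.eq_of_adj (hv : T.IsLeaf v) (ha : T.Adj v a) (hb : T.Adj v b) : a = b := by
  obtain ⟨x, hx⟩ := Set.ncard_eq_one.mp hv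
  have ha' : a ∈ T.neighborSet v := ha
  have hb' : b ∈ T.neighborSet v := hb
  rw [hx] at ha' hb'
  exact ha'.trans hb'.symm

theorem Connected.mem_of_closed {A : Set ℕ} (hT : T.Connected)
    (hA : ∀ x ∈ A, ∀ y, T.Adj x y → y ∈ A) (hu : u ∈ T.verts) (huA : u ∈ A)
    (hv : v ∈ T.verts) : v ∈ A :=
  (hT u hu v hv).mem_of_closed (fun x hx y hxy => hA x hx y hxy.1) huA

namespace IsTreeGraph

theorem not_adj_of_adj_of_adj (hT : IsTreeGraph T) (hab : T.Adj a b) (hbc : T.Adj b c) :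
    ¬ T.Adj a c := fun hac =>
  hT.2.2 a b hab <| .head ⟨hac, fun h => hbc.ne h.2.symm, fun h => hab.ne h.1⟩ <|
    .single ⟨T.symm b c hbc, fun h => hac.ne h.1.symm, fun h => hab.ne h.2.symm⟩

theorem isAcyclic (hT : IsTreeGraph T) : T.toSimpleGraph.IsAcyclic := by
  refine SimpleGraph.isAcyclic_iff_forall_adj_isBridge.mpr fun u v huv h => hT.2.2 u v huv ?_
  refine Relation.ReflTransGen.mono (fun x y hxy => ?_) _ _
    ((SimpleGraph.reachable_iff_reflTransGen _ _).mp h)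
  rw [SimpleGraph.deleteEdges_adj, Set.mem_singleton_iff, Sym2.eq_iff] at hxy
  exact ⟨hxy.1, fun h => hxy.2 (.inl h), fun h => hxy.2 (.inr h)⟩

theorem exists_adj (hT : IsTreeGraph T) (hcard : 2 ≤ T.verts.card) (hv : v ∈ T.verts) :
    ∃ u, T.Adj v u := by
  obtain ⟨w, hw, hne⟩ := T.verts.exists_mem_ne hcard v
  rcases (hT.2.1 v hv w hw).cases_head with rfl | ⟨x, hx, -⟩
  · exact absurd rfl hne
  · exact ⟨x, hx.1⟩

theorem three_le_degree (hT : IsTreeGraph T) (hcard : 2 ≤ T.verts.card) (hv : v ∈ T.verts)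
    (hleaf : ¬ T.IsLeaf v) (h2 : T.degree v ≠ 2) : 3 ≤ T.degree v := by
  obtain ⟨u, hu⟩ := hT.exists_adj hcard hv
  have : 0 < T.degree v := (Set.ncard_pos (T.finite_neighborSet v)).mpr ⟨u, hu⟩
  unfold IsLeaf at hleaf
  omega

theorem not_adj_of_isLeaf (hT : IsTreeGraph T) (hcard : 3 ≤ T.verts.card) (hu : T.IsLeaf u)
    (hv : T.IsLeaf v) : ¬ T.Adj u v := by
  intro huv
  have hclosed : ∀ x ∈ ({u, v} : Set ℕ), ∀ y, T.Adj x y → y ∈ ({u, v} : Set ℕ) := by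
    rintro x (rfl | rfl) y hxy
    · simp [hu.eq_of_adj hxy huv]
    · simp [hv.eq_of_adj hxy (T.symm _ _ huv)]
  have hsub : T.verts ⊆ {u, v} := fun w hw => by
    simpa using hT.2.1.mem_of_closed hclosed (T.support u v huv).1 (by simp) hw
  have := Finset.card_le_card hsub
  have := Finset.card_le_two (a := u) (b := v)
  omega

theorem exists_center_of_leaves_subset (hT : IsTreeGraph T) (hcard : 4 ≤ T.verts.card)
    (hnd2 : ∀ v ∈ T.verts, T.degree v ≠ 2)
    (hleaves : ∀ v ∈ T.verts, T.IsLeaf v → v = a ∨ v = b ∨ v = c) :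
    ∃ z, T.Adj z a ∧ T.Adj z b ∧ T.Adj z c := by
  have leaf_nbrs : ∀ z ∈ T.verts, ¬ T.IsLeaf z →
      (∀ x ∈ T.neighborSet z, ∀ y ∈ T.neighborSet z, ¬ T.IsLeaf x → ¬ T.IsLeaf y → x = y) →
      ∃ x ∈ T.neighborSet z, ∃ y ∈ T.neighborSet z, x ≠ y ∧ T.IsLeaf x ∧ T.IsLeaf y :=
    fun z hz hzl => Set.exists_ne_of_three_le_ncard
      (hT.three_le_degree (by omega) hz hzl (hnd2 z hz))
  -- The internal vertices span a forest; each leaf of it has two leaves of `T` as children,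
  -- so an edge of that forest would give four distinct leaves of `T`.
  have no_internal_edge : ∀ u w, T.Adj u w → ¬ T.IsLeaf u → ¬ T.IsLeaf w → False := by
    intro u w huw hu hw
    let S : Set ℕ := {v | v ∈ T.verts ∧ ¬ T.IsLeaf v}
    have : Finite S := (T.verts.finite_toSet.subset fun _ hv => hv.1).to_subtype
    obtain ⟨v₁, v₂, hne, h₁, h₂⟩ := (hT.isAcyclic.induce S).exists_ne_existsUnique_adj
      (u := ⟨u, (T.support u w huw).1, hu⟩) (w := ⟨w, (T.support u w huw).2, hw⟩) huw
    have two_leaves : ∀ v : S, (∃! y, (T.toSimpleGraph.induce S).Adj v y) →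
        ∃ x ∈ T.neighborSet v, ∃ y ∈ T.neighborSet v, x ≠ y ∧ T.IsLeaf x ∧ T.IsLeaf y := by
      rintro ⟨v, hv, hvl⟩ ⟨y₀, -, hy₀⟩
      refine leaf_nbrs v hv hvl fun x hx y hy hxl hyl => ?_
      have hxS : x ∈ S := ⟨(T.support v x hx).2, hxl⟩
      have hyS : y ∈ S := ⟨(T.support v y hy).2, hyl⟩
      exact congrArg Subtype.val ((hy₀ ⟨x, hxS⟩ hx).trans (hy₀ ⟨y, hyS⟩ hy).symm)
    obtain ⟨x₁, hx₁, y₁, hy₁, hxy₁, hx₁l, hy₁l⟩ := two_leaves v₁ h₁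
    obtain ⟨x₂, hx₂, y₂, hy₂, hxy₂, hx₂l, hy₂l⟩ := two_leaves v₂ h₂
    have hdistinct : ∀ x ∈ T.neighborSet v₁, ∀ y ∈ T.neighborSet v₂, T.IsLeaf x → x ≠ y :=
      fun x hx y hy hxl hxy => hne (Subtype.ext (hxl.eq_of_adj (T.symm _ _ hx)
        (T.symm _ _ (hxy ▸ hy))))
    have := hleaves x₁ (T.support _ _ hx₁).2 hx₁l
    have := hleaves y₁ (T.support _ _ hy₁).2 hy₁l
    have := hleaves x₂ (T.support _ _ hx₂).2 hx₂l
    have := hleaves y₂ (T.support _ _ hy₂).2 hy₂l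
    have := hdistinct x₁ hx₁ x₂ hx₂ hx₁l
    have := hdistinct x₁ hx₁ y₂ hy₂ hx₁l
    have := hdistinct y₁ hy₁ x₂ hx₂ hy₁l
    have := hdistinct y₁ hy₁ y₂ hy₂ hy₁l
    omega
  obtain ⟨z, hz, hzl⟩ : ∃ z ∈ T.verts, ¬ T.IsLeaf z := by
    by_contra! h
    have hsub : T.verts ⊆ {a, b, c} := fun v hv => by simpa using hleaves v hv (h v hv)
    have := Finset.card_le_card hsub
    have := Finset.card_le_three (a := a) (b := b) (c := c)
    omega
  have hsub : T.neighborSet z ⊆ {a, b, c} := fun x hx => by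
    by_cases hxl : T.IsLeaf x
    · simpa using hleaves x (T.support z x hx).2 hxl
    · exact (no_internal_edge z x hx hzl hxl).elim
  have hle : ({a, b, c} : Set ℕ).ncard ≤ T.degree z := by
    have := Set.ncard_insert_le a {b, c}
    have := Set.ncard_insert_le b {c}
    have := hT.three_le_degree (by omega) hz hzl (hnd2 z hz)
    rw [Set.ncard_singleton] at *
    omega
  have heq := Set.eq_of_subset_of_ncard_le hsub hle
  have hadj : ∀ x ∈ ({a, b, c} : Set ℕ), T.Adj z x := fun x hx => by
    rw [← heq] at hx
    exact hx
  exact ⟨z, hadj a (by simp), hadj b (by simp), hadj c (by simp)⟩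

end IsTreeGraph

theorem D3bConfig.symm (h : G.D3bConfig p q r s) : G.D3bConfig r q p s :=
  have ⟨hdp, hdq, hdr, hpq, hqr, hnpr, hpr, hsp, hsq, hsr⟩ := h
  ⟨hdr, hdq, hdp, G.symm _ _ hqr, G.symm _ _ hpq, fun h => hnpr (G.symm _ _ h), hpr.symm,
    hsr, hsq, hsp⟩

theorem D3bConfig.neighborSet_eq (h : G.D3bConfig p q r s) : G.neighborSet q = {p, r, s} := by
  have ⟨_, hdq, _, hpq, hqr, _, hpr, hsp, hsq, hsr⟩ := h
  refine (Set.eq_of_subset_of_ncard_le ?_ ?_ (G.finite_neighborSet q)).symm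
  · rintro x (rfl | rfl | rfl)
    exacts [G.symm _ _ hpq, hqr, G.symm _ _ hsq]
  · rw [Set.ncard_eq_three.mpr ⟨p, r, s, hpr, hsp.ne.symm, hsr.ne.symm, rfl⟩]
    exact hdq.le

theorem cycleAdj_symm (h : cycleAdj G T a b) : cycleAdj G T b a :=
  ⟨G.symm a b h.1, fun h' => h.2 (T.symm b a h')⟩

theorem cycleAdj_of_isLeaf_of_ne {t : ℕ} (hv : T.IsLeaf v) (hvt : T.Adj v t) (hvu : G.Adj v u)
    (hne : u ≠ t) : cycleAdj G T v u :=
  ⟨hvu, fun h => hne (hv.eq_of_adj h hvt)⟩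

namespace IsHalinVia

theorem adj_of_treeAdj (hH : IsHalinVia G T) (h : T.Adj a b) : G.Adj a b :=
  hH.2.2.2.2.1 a b h

theorem isLeaf_of_cycleAdj (hH : IsHalinVia G T) (h : cycleAdj G T a b) :
    T.IsLeaf a ∧ T.IsLeaf b :=
  hH.2.2.2.2.2.1 a b h

theorem treeAdj_of_not_isLeaf (hH : IsHalinVia G T) (ha : ¬ T.IsLeaf a) (hab : G.Adj a b) :
    T.Adj a b :=
  by_contra fun h => ha (hH.isLeaf_of_cycleAdj ⟨hab, h⟩).1

theorem neighborSet_eq (hH : IsHalinVia G T) (ha : ¬ T.IsLeaf a) :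
    G.neighborSet a = T.neighborSet a :=
  Set.ext fun _ => ⟨hH.treeAdj_of_not_isLeaf ha, hH.adj_of_treeAdj⟩

theorem cycleAdj_of_isLeaf (hH : IsHalinVia G T) (ha : T.IsLeaf a) (hb : T.IsLeaf b)
    (hab : G.Adj a b) : cycleAdj G T a b :=
  ⟨hab, hH.1.not_adj_of_isLeaf (by have := hH.2.2.1; omega) ha hb⟩

theorem exists_treeAdj (hH : IsHalinVia G T) (hv : v ∈ G.verts) : ∃ u, T.Adj v u :=
  hH.1.exists_adj (by have := hH.2.2.1; omega) (hH.2.1 ▸ hv)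

theorem isLeaf_of_triangle (hH : IsHalinVia G T) (hab : G.Adj a b) (hbc : G.Adj b c)
    (hac : G.Adj a c) (ha : ¬ T.IsLeaf a) : T.IsLeaf b :=
  by_contra fun hb => hH.1.not_adj_of_adj_of_adj (hH.treeAdj_of_not_isLeaf ha hab)
    (hH.treeAdj_of_not_isLeaf hb hbc) (hH.treeAdj_of_not_isLeaf ha hac)

theorem eq_of_isLeaf_of_cycle_triangle (hH : IsHalinVia G T) (hab : cycleAdj G T a b)
    (hbc : cycleAdj G T b c) (hac : cycleAdj G T a c) (hv : v ∈ G.verts) (hvl : T.IsLeaf v) :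
    v = a ∨ v = b ∨ v = c := by
  have ⟨_, _, _, _, _, _, hc2, hre, _⟩ := hH
  have cycle_nbrs : ∀ x y z, cycleAdj G T x y → cycleAdj G T x z → y ≠ z →
      ∀ w, cycleAdj G T x w → w = y ∨ w = z := fun x y z hxy hxz hyz w hxw =>
    Set.eq_or_eq_of_ncard_eq_two
      (hc2 x (G.support x y hxy.1).1 (hH.isLeaf_of_cycleAdj hxy).1) hxy hxz hyz hxw
  have hclosed : ∀ x ∈ ({a, b, c} : Set ℕ), ∀ y, cycleAdj G T x y → y ∈ ({a, b, c} : Set ℕ) := by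
    rintro x (rfl | rfl | rfl) y hy
    · rcases cycle_nbrs _ _ _ hab hac hbc.1.ne y hy with rfl | rfl <;> simp
    · rcases cycle_nbrs _ _ _ (cycleAdj_symm hab) hbc hac.1.ne y hy with rfl | rfl <;> simp
    · rcases cycle_nbrs _ _ _ (cycleAdj_symm hac) (cycleAdj_symm hbc) hab.1.ne y hy
        with rfl | rfl <;> simp
  exact (hre a v (G.support a b hab.1).1 hv (hH.isLeaf_of_cycleAdj hab).1 hvl).mem_of_closed
    hclosed (by simp)

theorem exists_center_of_cycle_triangle (hH : IsHalinVia G T) (hab : cycleAdj G T a b)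
    (hbc : cycleAdj G T b c) (hac : cycleAdj G T a c) :
    ∃ z, T.Adj z a ∧ T.Adj z b ∧ T.Adj z c :=
  hH.1.exists_center_of_leaves_subset hH.2.2.1 hH.2.2.2.1 fun _ hv =>
    hH.eq_of_isLeaf_of_cycle_triangle hab hbc hac (hH.2.1 ▸ hv)

theorem not_isLeaf_of_d3aConfig (hH : IsHalinVia G T) (h : G.D3aConfig p q r p' q' r')
    (hp : T.IsLeaf p) (hq : T.IsLeaf q) : ¬ T.IsLeaf r := by
  intro hr
  have ⟨_, _, _, hpq, hqr, hpr, hpp', hqq', _, hp', hq', _, hne, _, _⟩ := h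
  have hpq' := hH.cycleAdj_of_isLeaf hp hq hpq
  have hqr' := hH.cycleAdj_of_isLeaf hq hr hqr
  have hpr' := hH.cycleAdj_of_isLeaf hp hr hpr
  obtain ⟨z, hzp, hzq, -⟩ := hH.exists_center_of_cycle_triangle hpq' hqr' hpr'
  have parent : ∀ x x', T.IsLeaf x → G.Adj x x' → x' ∉ ({p, q, r} : Set ℕ) → T.Adj x x' :=
    fun x x' hx hxx' hx' => by_contra fun h => hx' <| by
      simpa using hH.eq_of_isLeaf_of_cycle_triangle hpq' hqr' hpr' (G.support _ _ hxx').2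
        (hH.isLeaf_of_cycleAdj ⟨hxx', h⟩).2
  exact hne ((hp.eq_of_adj (parent p p' hp hpp' hp') (T.symm _ _ hzp)).trans
    (hq.eq_of_adj (T.symm _ _ hzq) (parent q q' hq hqq' hq')))

theorem leaf_children_of_triangle (hH : IsHalinVia G T) (hab : G.Adj a b) (hac : G.Adj a c)
    (hbc : G.Adj b c) (ha : ¬ T.IsLeaf a) (hda : G.degree a = 3) :
    T.Adj a b ∧ T.Adj a c ∧ T.IsLeaf b ∧ T.IsLeaf c ∧ T.degree a = 3 :=
  ⟨hH.treeAdj_of_not_isLeaf ha hab, hH.treeAdj_of_not_isLeaf ha hac,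
    hH.isLeaf_of_triangle hab hbc hac ha, hH.isLeaf_of_triangle hac (G.symm _ _ hbc) hab ha,
    by rw [degree, ← hH.neighborSet_eq ha]; exact hda⟩

theorem exists_leaf_children_of_d3aConfig (hH : IsHalinVia G T)
    (h : G.D3aConfig p q r p' q' r') :
    ∃ a b c : ℕ, ({a, b, c} : Set ℕ) = {p, q, r} ∧
      T.Adj a b ∧ T.Adj a c ∧ T.IsLeaf b ∧ T.IsLeaf c ∧ T.degree a = 3 := by
  have ⟨hdp, hdq, hdr, hpq, hqr, hpr, _⟩ := h
  by_cases hp : T.IsLeaf p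
  · by_cases hq : T.IsLeaf q
    · refine ⟨r, p, q, by ext; simp only [Set.mem_insert_iff, Set.mem_singleton_iff]; tauto, ?_⟩
      exact hH.leaf_children_of_triangle (G.symm _ _ hpr) (G.symm _ _ hqr) hpq
        (hH.not_isLeaf_of_d3aConfig h hp hq) hdr
    · exact ⟨q, p, r, Set.insert_comm _ _ _,
        hH.leaf_children_of_triangle (G.symm _ _ hpq) hqr hpr hq hdq⟩
  · exact ⟨p, q, r, rfl, hH.leaf_children_of_triangle hpq hpr hqr hp hdp⟩

theorem isLeaf_of_d3bConfig (hH : IsHalinVia G T) (h : G.D3bConfig p q r s) : T.IsLeaf q := by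
  by_contra hq
  have ⟨hT, hV, _, _, _, _, hc2, _, _⟩ := hH
  have ⟨_, _, _, hpq, hqr, hnpr, _, hsp, hsq, hsr⟩ := h
  have hp := hH.isLeaf_of_triangle (G.symm _ _ hpq) (G.symm _ _ hsp) (G.symm _ _ hsq) hq
  have hr := hH.isLeaf_of_triangle hqr (G.symm _ _ hsr) (G.symm _ _ hsq) hq
  have hs := hH.isLeaf_of_triangle (G.symm _ _ hsq) hsp (G.symm _ _ hpq) hq
  have hTq : T.neighborSet q = {p, r, s} := (hH.neighborSet_eq hq).symm.trans h.neighborSet_eq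
  have hclosed : ∀ x ∈ ({p, q, r, s} : Set ℕ), ∀ y, T.Adj x y → y ∈ ({p, q, r, s} : Set ℕ) := by
    have to_q : ∀ x, T.IsLeaf x → G.Adj q x → ∀ y, T.Adj x y → y ∈ ({p, q, r, s} : Set ℕ) :=
      fun x hx hqx y hxy => by
        simp [hx.eq_of_adj hxy (T.symm _ _ (hH.treeAdj_of_not_isLeaf hq hqx))]
    rintro x (rfl | rfl | rfl | rfl) y hy
    · exact to_q _ hp (G.symm _ _ hpq) y hy
    · have : y ∈ T.neighborSet x := hy
      rw [hTq] at this
      rcases this with rfl | rfl | rfl <;> simp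
    · exact to_q _ hr hqr y hy
    · exact to_q _ hs (G.symm _ _ hsq) y hy
  have hverts : ∀ v ∈ G.verts, v ∈ ({p, q, r, s} : Set ℕ) := fun v hv =>
    hT.2.1.mem_of_closed hclosed (hV ▸ (G.support p q hpq).2) (by simp) (hV ▸ hv)
  have hsub : {u | cycleAdj G T p u} ⊆ {s} := by
    intro u hu
    rcases hverts u (G.support p u hu.1).2 with rfl | rfl | rfl | rfl
    · exact absurd hu.1 (G.loopless _)
    · exact absurd (T.symm _ _ (hH.treeAdj_of_not_isLeaf hq (G.symm _ _ hpq))) hu.2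
    · exact absurd hu.1 hnpr
    · rfl
  have := Set.ncard_le_ncard hsub (Set.finite_singleton s)
  rw [hc2 p (G.support _ _ hpq).1 hp, Set.ncard_singleton] at this
  omega

theorem not_treeAdj_of_d3bConfig (hH : IsHalinVia G T) (h : G.D3bConfig p q r s)
    (hq : T.IsLeaf q) : ¬ T.Adj q p := by
  intro hqp
  have ⟨_, _, _, _, hqr, hnpr, hpr, hsp, hsq, hsr⟩ := h
  have hqr' := cycleAdj_of_isLeaf_of_ne hq hqp hqr hpr.symm
  have hqs := cycleAdj_of_isLeaf_of_ne hq hqp (G.symm _ _ hsq) hsp.ne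
  have hsr' := hH.cycleAdj_of_isLeaf (hH.isLeaf_of_cycleAdj hqs).2
    (hH.isLeaf_of_cycleAdj hqr').2 hsr
  obtain ⟨z, hzq, hzr, -⟩ := hH.exists_center_of_cycle_triangle hqr' (cycleAdj_symm hsr') hqs
  exact hnpr (hH.adj_of_treeAdj (hq.eq_of_adj (T.symm _ _ hzq) hqp ▸ hzr))

theorem leaf_children_of_d3bConfig (hH : IsHalinVia G T) (h : G.D3bConfig p q r s) :
    T.Adj s p ∧ T.Adj s q ∧ T.Adj s r ∧ T.IsLeaf p ∧ T.IsLeaf q ∧ T.IsLeaf r ∧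
      cycleAdj G T p q ∧ cycleAdj G T q r := by
  have ⟨_, _, _, hpq, hqr, _, _, hsp, _, hsr⟩ := h
  have hq := hH.isLeaf_of_d3bConfig h
  obtain ⟨t, hqt⟩ := hH.exists_treeAdj (G.support p q hpq).2
  obtain rfl : t = s := by
    have : t ∈ G.neighborSet q := hH.adj_of_treeAdj hqt
    rw [h.neighborSet_eq] at this
    rcases this with rfl | rfl | rfl
    · exact absurd hqt (hH.not_treeAdj_of_d3bConfig h hq)
    · exact absurd hqt (hH.not_treeAdj_of_d3bConfig h.symm hq)
    · rfl
  have hp := (hH.isLeaf_of_cycleAdj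
    (cycleAdj_of_isLeaf_of_ne hq hqt (G.symm _ _ hpq) hsp.ne.symm)).2
  have hr := (hH.isLeaf_of_cycleAdj (cycleAdj_of_isLeaf_of_ne hq hqt hqr hsr.ne.symm)).2
  have ht : ¬ T.IsLeaf t := fun ht => (hH.cycleAdj_of_isLeaf hq ht (hH.adj_of_treeAdj hqt)).2 hqt
  exact ⟨hH.treeAdj_of_not_isLeaf ht hsp, T.symm _ _ hqt, hH.treeAdj_of_not_isLeaf ht hsr,
    hp, hq, hr, hH.cycleAdj_of_isLeaf hp hq hpq, hH.cycleAdj_of_isLeaf hq hr hqr⟩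

end IsHalinVia

end FinGraph

/-- In a Halin graph, every D3a reduction collapses a triangle made of a tree vertex
whose only children are two leaves together with those leaves, and every D3b
reduction removes the middle one of three consecutive leaf children of its parent. -/
theorem halin_reductions_at_leaves (G T : FinGraph) (h : FinGraph.IsHalinVia G T) :
    (∀ p q r p' q' r', G.D3aConfig p q r p' q' r' →
      ∃ a b c : ℕ, ({a, b, c} : Set ℕ) = {p, q, r} ∧
        T.Adj a b ∧ T.Adj a c ∧ T.IsLeaf b ∧ T.IsLeaf c ∧ T.degree a = 3) ∧
    (∀ p q r s, G.D3bConfig p q r s →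
      T.Adj s p ∧ T.Adj s q ∧ T.Adj s r ∧ T.IsLeaf p ∧ T.IsLeaf q ∧ T.IsLeaf r ∧
      FinGraph.cycleAdj G T p q ∧ FinGraph.cycleAdj G T q r) :=
  ⟨fun _ _ _ _ _ _ hcfg => h.exists_leaf_children_of_d3aConfig hcfg,
    fun _ _ _ _ hcfg => h.leaf_children_of_d3bConfig hcfg⟩
end

section
/- The octahedral graph K_{2,2,2} has treewidth exactly four, and it is minor-minimal with this property: every proper minor of K_{2,2,2} has treewidth at most three. -/
/-!
Lower bound: the bags of a tree decomposition containing a fixed vertex form a subtree, and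
subtrees of a tree have the Helly property, so the graph joining two vertices that share a bag has
clique number at most the width plus one. This graph contains `K_{2,2,2}`. If it misses the pair
`{a, a'}` of one part, the subtrees of `a` and `a'` are disjoint and separated by a single node,
which then lies in the subtrees of the four other vertices; so the two other parts are edges.
Either way two parts are edges, and with a fifth vertex they form a `5`-clique.

Upper bounds: opposite vertices `a, a'` give the two bags `V \ {a}` and `V \ {a'}`, and the
octahedron minus an edge has a decomposition into three bags of size four along a path. A proper
minor has at most four vertices; or five, when at most one branch set is not a singleton and two
singleton branch sets sit on opposite vertices; or it is a spanning subgraph missing an edge.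
-/

/-- Treewidth at most `k`, via tree decompositions. -/
def TreewidthLE {V : Type} (G : SimpleGraph V) (k : ℕ) : Prop :=
  ∃ (ι : Type) (T : SimpleGraph ι) (bag : ι → Finset V),
    T.IsTree ∧
    (∀ v, ∃ i, v ∈ bag i) ∧
    (∀ u v, G.Adj u v → ∃ i, u ∈ bag i ∧ v ∈ bag i) ∧
    (∀ (v : V) (i j : ι) (p : T.Walk i j), p.IsPath → v ∈ bag i → v ∈ bag j →
      ∀ m ∈ p.support, v ∈ bag m) ∧
    (∀ i, (bag i).card ≤ k + 1)

/-- The octahedral graph `K_{2,2,2}`: complete tripartite with parts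
`{0,3}`, `{1,4}`, `{2,5}` (adjacency iff different residues mod 3). -/
def K222 : SimpleGraph (Fin 6) where
  Adj a b := a.val % 3 ≠ b.val % 3
  symm := ⟨fun _ _ h => Ne.symm h⟩
  loopless := ⟨fun _ h => h rfl⟩

/-- `H` is a minor of `G`, witnessed by nonempty, disjoint, connected branch sets. -/
def IsMinorOf {W V : Type} (H : SimpleGraph W) (G : SimpleGraph V) : Prop :=
  ∃ B : W → Set V,
    (∀ w, (B w).Nonempty) ∧
    (∀ u v : W, u ≠ v → Disjoint (B u) (B v)) ∧
    (∀ w, ∀ a ∈ B w, ∀ b ∈ B w,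
      Relation.ReflTransGen (fun x y => G.Adj x y ∧ x ∈ B w ∧ y ∈ B w) a b) ∧
    (∀ u v, H.Adj u v → ∃ a ∈ B u, ∃ b ∈ B v, G.Adj a b)

open Finset Function

namespace SimpleGraph

section PathClosed

variable {ι : Type*} {T : SimpleGraph ι}

/-- In a tree this is the vertex set of a subtree. -/
def PathClosed (T : SimpleGraph ι) (S : Set ι) : Prop :=
  ∀ ⦃i j : ι⦄ (p : T.Walk i j), p.IsPath → i ∈ S → j ∈ S → ∀ m ∈ p.support, m ∈ S

lemma PathClosed.inter {S S' : Set ι} (hS : T.PathClosed S) (hS' : T.PathClosed S') :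
    T.PathClosed (S ∩ S') :=
  fun _ _ p hp hi hj m hm => ⟨hS p hp hi.1 hj.1 m hm, hS' p hp hi.2 hj.2 m hm⟩

lemma Walk.reachable_deleteEdges_of_notMem_support {a b x : ι} {e : Sym2 ι} (p : T.Walk a b)
    (hx : x ∉ p.support) (he : x ∈ e) : (T.deleteEdges {e}).Reachable a b :=
  ⟨p.toDeleteEdge e fun h => hx (p.mem_support_of_mem_edges h he)⟩

lemma PathClosed.reachable_deleteEdges (hT : T.Connected) {S : Set ι} (hS : T.PathClosed S)
    {a b x : ι} {e : Sym2 ι} (ha : a ∈ S) (hb : b ∈ S) (hx : x ∉ S) (he : x ∈ e) :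
    (T.deleteEdges {e}).Reachable a b := by
  classical
  obtain ⟨p⟩ := hT.preconnected a b
  exact (p.toPath : T.Walk a b).reachable_deleteEdges_of_notMem_support
    (fun h => hx (hS _ p.toPath.2 ha hb x h)) he

lemma Walk.exists_adj_forall_notMem {A : Set ι} {a b : ι} (p : T.Walk a b) (hb : b ∉ A)
    (hA : ∃ z ∈ p.support, z ∈ A) :
    ∃ x ∈ A, ∃ y, T.Adj x y ∧ ∃ q : T.Walk y b, ∀ z ∈ q.support, z ∉ A := by
  induction p with
  | nil =>
    obtain ⟨z, hz, hzA⟩ := hA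
    rw [Walk.support_nil, List.mem_singleton] at hz
    exact absurd (hz ▸ hzA) hb
  | @cons u v w huv q ih =>
    by_cases hq : ∃ z ∈ q.support, z ∈ A
    · exact ih hb hq
    · push Not at hq
      obtain ⟨z, hz, hzA⟩ := hA
      rcases List.mem_cons.mp (Walk.support_cons huv q ▸ hz) with rfl | hz
      · exact ⟨z, hzA, v, huv, q, hq⟩
      · exact absurd hzA (hq z hz)

lemma IsTree.exists_mem_forall_of_disjoint (hT : T.IsTree) {A B : Set ι} (hA : T.PathClosed A)
    (hB : T.PathClosed B) (hAB : Disjoint A B) {a b : ι} (ha : a ∈ A) (hb : b ∈ B) :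
    ∃ x ∈ A, ∀ S, T.PathClosed S → (S ∩ A).Nonempty → (S ∩ B).Nonempty → x ∈ S := by
  obtain ⟨p⟩ := hT.connected.preconnected a b
  obtain ⟨x, hxA, y, hxy, q, hq⟩ :=
    p.exists_adj_forall_notMem (hAB.notMem_of_mem_right hb) ⟨a, p.start_mem_support, ha⟩
  refine ⟨x, hxA, fun S hS ⟨s, hsS, hsA⟩ ⟨t, htS, htB⟩ => by_contra fun hxS => ?_⟩
  -- `x ~ s ~ t ~ b ~ y` avoids the bridge `xy`, as `y ∉ A`, `x ∉ S`, `x ∉ B` and `x ∉ q`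
  refine isBridge_iff.mp (isAcyclic_iff_forall_adj_isBridge.mp hT.isAcyclic hxy) ?_
  have hxs := hA.reachable_deleteEdges hT.connected hxA hsA (hq y q.start_mem_support)
    (Sym2.mem_mk_right x y)
  have hst := hS.reachable_deleteEdges hT.connected hsS htS hxS (Sym2.mem_mk_left x y)
  have htb := hB.reachable_deleteEdges hT.connected htB hb (hAB.notMem_of_mem_left hxA)
    (Sym2.mem_mk_left x y)
  have hby := q.reverse.reachable_deleteEdges_of_notMem_support
    (by rw [Walk.support_reverse, List.mem_reverse]; exact fun h => hq x h hxA)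
    (Sym2.mem_mk_left x y)
  exact hxs.trans (hst.trans (htb.trans hby))

lemma IsTree.inter_nonempty_of_pairwise (hT : T.IsTree) {S₁ S₂ S₃ : Set ι}
    (h₁ : T.PathClosed S₁) (h₂ : T.PathClosed S₂) (h₃ : T.PathClosed S₃)
    (h₁₂ : (S₁ ∩ S₂).Nonempty) (h₁₃ : (S₁ ∩ S₃).Nonempty) (h₂₃ : (S₂ ∩ S₃).Nonempty) :
    (S₁ ∩ S₂ ∩ S₃).Nonempty := by
  by_contra h
  obtain ⟨z, hz⟩ := h₁₂
  obtain ⟨a, ha⟩ := h₁₃.mono Set.inter_subset_right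
  obtain ⟨x, hx₃, hx⟩ := hT.exists_mem_forall_of_disjoint h₃ (h₁.inter h₂)
    (Set.disjoint_left.mpr fun y hy₃ hy => h ⟨y, hy, hy₃⟩) ha hz
  exact h ⟨x, ⟨hx S₁ h₁ h₁₃ ⟨z, hz.1, hz⟩, hx S₂ h₂ h₂₃ ⟨z, hz.2, hz⟩⟩, hx₃⟩

/-- The Helly property of subtrees. -/
theorem IsTree.exists_forall_mem_of_pairwise (hT : T.IsTree) :
    ∀ {l : List (Set ι)}, (∀ S ∈ l, T.PathClosed S) →
      (∀ S ∈ l, ∀ S' ∈ l, (S ∩ S').Nonempty) → ∃ i, ∀ S ∈ l, i ∈ S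
  | [], _, _ => ⟨hT.connected.nonempty.some, by simp⟩
  | [S], _, hl => by
    obtain ⟨i, hi, -⟩ := hl S (by simp) S (by simp)
    exact ⟨i, by simpa⟩
  | S :: R :: l, hc, hl => by
    have hS := hc S (by simp)
    have hR := hc R (by simp)
    have key : ∀ X ∈ l, (S ∩ R ∩ X).Nonempty := fun X hX =>
      hT.inter_nonempty_of_pairwise hS hR (hc X (by simp [hX])) (hl S (by simp) R (by simp))
        (hl S (by simp) X (by simp [hX])) (hl R (by simp) X (by simp [hX]))
    obtain ⟨i, hi⟩ := hT.exists_forall_mem_of_pairwise (l := (S ∩ R) :: l)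
      (by
        simp only [List.forall_mem_cons]
        exact ⟨hS.inter hR, fun X hX => hc X (by simp [hX])⟩)
      (by
        simp only [List.mem_cons]
        rintro X (rfl | hX) Y (rfl | hY)
        · simpa using hl S (by simp) R (by simp)
        · exact key Y hY
        · exact Set.inter_comm X _ ▸ key X hX
        · exact hl X (by simp [hX]) Y (by simp [hY]))
    have hSR := hi _ List.mem_cons_self
    simp only [List.mem_cons, forall_eq_or_imp] at hi ⊢
    exact ⟨i, hSR.1, hSR.2, hi.2⟩

end PathClosed

section TouchGraph

variable {V ι : Type*} {T : SimpleGraph ι} {bag : ι → Finset V}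

def touchGraph (bag : ι → Finset V) : SimpleGraph V where
  Adj u v := u ≠ v ∧ ∃ i, u ∈ bag i ∧ v ∈ bag i
  symm := ⟨fun _ _ ⟨h, i, hu, hv⟩ => ⟨h.symm, i, hv, hu⟩⟩
  loopless := ⟨fun _ h => h.1 rfl⟩

lemma le_touchGraph {G : SimpleGraph V}
    (hedge : ∀ u v, G.Adj u v → ∃ i, u ∈ bag i ∧ v ∈ bag i) : G ≤ touchGraph bag :=
  fun u v h => ⟨h.ne, hedge u v h⟩

lemma touchGraph_adj_iff {u v : V} (huv : u ≠ v) :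
    (touchGraph bag).Adj u v ↔ ({i | u ∈ bag i} ∩ {i | v ∈ bag i}).Nonempty :=
  ⟨fun ⟨_, i, hu, hv⟩ => ⟨i, hu, hv⟩, fun ⟨i, hu, hv⟩ => ⟨huv, i, hu, hv⟩⟩

variable (hT : T.IsTree) (hpath : ∀ v, T.PathClosed {i | v ∈ bag i}) (hcov : ∀ v, ∃ i, v ∈ bag i)
include hT hpath hcov

lemma exists_subset_bag_of_isClique {s : Finset V} (hs : (touchGraph bag).IsClique s) :
    ∃ i, s ⊆ bag i := by
  obtain ⟨i, hi⟩ := hT.exists_forall_mem_of_pairwise (l := s.toList.map fun v => {i | v ∈ bag i})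
    (by simpa using fun v _ => hpath v)
    (by
      simp only [List.mem_map, Finset.mem_toList]
      rintro _ ⟨u, hu, rfl⟩ _ ⟨v, hv, rfl⟩
      obtain rfl | huv := eq_or_ne u v
      · obtain ⟨i, hi⟩ := hcov u
        exact ⟨i, hi, hi⟩
      · exact (touchGraph_adj_iff huv).mp (hs hu hv huv))
  exact ⟨i, fun v hv => hi _ (List.mem_map_of_mem (Finset.mem_toList.mpr hv))⟩

lemma cliqueFree_touchGraph {k : ℕ} (hcard : ∀ i, #(bag i) ≤ k + 1) :
    (touchGraph bag).CliqueFree (k + 2) := fun s hs => by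
  obtain ⟨i, hi⟩ := exists_subset_bag_of_isClique hT hpath hcov hs.isClique
  have := (card_le_card hi).trans (hcard i)
  rw [hs.card_eq] at this
  omega

/-- Intersection graphs of subtrees have no induced `4`-cycle. -/
lemma touchGraph_adj_of_not_adj {u u' v w : V} (huu' : u ≠ u') (h : ¬(touchGraph bag).Adj u u')
    (hv : (touchGraph bag).Adj u v) (hv' : (touchGraph bag).Adj u' v)
    (hw : (touchGraph bag).Adj u w) (hw' : (touchGraph bag).Adj u' w) (hvw : v ≠ w) :
    (touchGraph bag).Adj v w := by
  rw [touchGraph_adj_iff huu', Set.not_nonempty_iff_eq_empty, ← Set.disjoint_iff_inter_eq_empty]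
    at h
  obtain ⟨a, ha⟩ := hcov u
  obtain ⟨a', ha'⟩ := hcov u'
  obtain ⟨x, -, hx⟩ := hT.exists_mem_forall_of_disjoint (hpath u) (hpath u') h ha ha'
  have meet {a b : V} (hab : (touchGraph bag).Adj a b) :
      ({i | b ∈ bag i} ∩ {i | a ∈ bag i}).Nonempty :=
    (touchGraph_adj_iff hab.ne').mp hab.symm
  exact ⟨hvw, x, hx _ (hpath v) (meet hv) (meet hv'), hx _ (hpath w) (meet hw) (meet hw')⟩

end TouchGraph

lemma Walk.IsPath.exists_adj_adj_of_mem_support {V : Type*} {G : SimpleGraph V} {u v m : V}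
    {p : G.Walk u v} (hp : p.IsPath) (hm : m ∈ p.support) (hmu : m ≠ u) (hmv : m ≠ v) :
    ∃ a b, a ≠ b ∧ G.Adj a m ∧ G.Adj m b := by
  obtain ⟨n, rfl, hn⟩ := Walk.mem_support_iff_exists_getVert.mp hm
  have h0 : n ≠ 0 := by rintro rfl; exact hmu p.getVert_zero
  have hl : n ≠ p.length := by rintro rfl; exact hmv p.getVert_length
  refine ⟨p.getVert (n - 1), p.getVert (n + 1), fun h => ?_, ?_, p.adj_getVert_succ (by omega)⟩
  · have := hp.getVert_injOn (by simp only [Set.mem_ofPred_eq]; omega)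
      (by simp only [Set.mem_ofPred_eq]; omega) h
    omega
  · simpa [Nat.sub_add_cancel (Nat.one_le_iff_ne_zero.mpr h0)] using
      p.adj_getVert_succ (i := n - 1) (by omega)

lemma mem_support_starGraph {ι : Type*} {r i j m : ι} {p : (starGraph r).Walk i j}
    (hp : p.IsPath) (hm : m ∈ p.support) : m = i ∨ m = j ∨ (m = r ∧ i ≠ j) := by
  by_cases hmi : m = i; · exact .inl hmi
  by_cases hmj : m = j; · exact .inr (.inl hmj)
  refine .inr (.inr ⟨by_contra fun hmr => ?_, ?_⟩)
  · obtain ⟨a, b, hab, ha, hb⟩ := hp.exists_adj_adj_of_mem_support hm hmi hmj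
    rw [starGraph_adj] at ha hb
    exact hab ((ha.2.resolve_right hmr).trans (hb.2.resolve_left hmr).symm)
  · rintro rfl
    rw [Walk.nil_iff_support_eq.mp (Walk.isPath_iff_nil.mp hp), List.mem_singleton] at hm
    exact hmi hm

end SimpleGraph

open SimpleGraph

section Decompositions

variable {V : Type} {G : SimpleGraph V} {k : ℕ}

lemma TreewidthLE.of_copy {W : Type} {H : SimpleGraph W} (h : TreewidthLE G k) (f : Copy H G) :
    TreewidthLE H k := by
  classical
  obtain ⟨ι, T, bag, hT, hcov, hedge, hpath, hcard⟩ := h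
  refine ⟨ι, T, fun i => (bag i).preimage f f.injective.injOn, hT, fun w => ?_,
    fun u v huv => ?_, fun w i j p hp hi hj m hm => ?_, fun i => ?_⟩
  · simpa using hcov (f w)
  · simpa using hedge _ _ (f.toHom.map_adj huv)
  · simpa using hpath (f w) i j p hp (by simpa using hi) (by simpa using hj) m hm
  · exact (card_le_card_of_injOn f (fun x hx => by simpa using hx) f.injective.injOn).trans
      (hcard i)

lemma treewidthLE_of_starGraph {ι : Type} (r : ι) (bag : ι → Finset V)
    (hcov : ∀ v, ∃ i, v ∈ bag i) (hedge : ∀ u v, G.Adj u v → ∃ i, u ∈ bag i ∧ v ∈ bag i)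
    (hcenter : ∀ v i j, i ≠ j → v ∈ bag i → v ∈ bag j → v ∈ bag r)
    (hcard : ∀ i, #(bag i) ≤ k + 1) : TreewidthLE G k := by
  refine ⟨ι, starGraph r, bag, isTree_starGraph r, hcov, hedge,
    fun v i j p hp hi hj m hm => ?_, hcard⟩
  rcases mem_support_starGraph hp hm with rfl | rfl | ⟨rfl, hij⟩
  exacts [hi, hj, hcenter v i j hij hi hj]

lemma treewidthLE_of_card_le [Fintype V] (h : Fintype.card V ≤ k + 1) : TreewidthLE G k :=
  treewidthLE_of_starGraph () (fun _ => univ) (fun v => ⟨(), mem_univ v⟩)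
    (fun u v _ => ⟨(), mem_univ u, mem_univ v⟩)
    (fun _ i j hij => absurd (Subsingleton.elim i j) hij)
    (fun _ => by simpa using h)

lemma treewidthLE_of_not_adj [Fintype V] [DecidableEq V] {u v : V} (huv : u ≠ v)
    (h : ¬G.Adj u v) (hcard : Fintype.card V ≤ k + 2) : TreewidthLE G k := by
  refine treewidthLE_of_starGraph (0 : Fin 2) ![univ.erase v, univ.erase u] (fun x => ?_)
    (fun x y hxy => ?_) (fun x i j hij => ?_) (fun i => ?_)
  · by_cases hx : x = v
    · exact ⟨1, by simp [hx, huv.symm]⟩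
    · exact ⟨0, by simp [hx]⟩
  · by_cases hv : x = v ∨ y = v
    · exact ⟨1, by simp; grind [G.adj_symm]⟩
    · exact ⟨0, by simp; grind⟩
  · fin_cases i <;> fin_cases j <;> simp_all
  · fin_cases i <;> simp [card_erase_of_mem] <;> omega

end Decompositions

instance : DecidableRel K222.Adj := fun a b =>
  inferInstanceAs (Decidable (a.val % 3 ≠ b.val % 3))

lemma K222_treewidthLE_four : TreewidthLE K222 4 :=
  treewidthLE_of_not_adj (u := 0) (v := 3) (by decide) (by decide) (by simp)

/-- `a + 3` is the vertex opposite `a`, and `-(a + b)` lies in the third part. -/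
lemma K222_isNClique_five : ∀ a b : Fin 6, K222.Adj a b →
    (K222 ⊔ fromEdgeSet {s(a, a + 3), s(b, b + 3)}).IsNClique 5 {a, a + 3, b, b + 3, -(a + b)} := by
  decide

lemma K222_not_cliqueFree_five {H : SimpleGraph (Fin 6)} (hle : K222 ≤ H)
    (hC4 : ∀ u u' v w, u ≠ u' → ¬H.Adj u u' → H.Adj u v → H.Adj u' v → H.Adj u w → H.Adj u' w →
      v ≠ w → H.Adj v w) :
    ¬H.CliqueFree 5 := by
  have clique (a b : Fin 6) (hab : K222.Adj a b) (ha : H.Adj a (a + 3)) (hb : H.Adj b (b + 3)) :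
      ¬H.CliqueFree 5 := fun hfree => hfree _ <| (K222_isNClique_five a b hab).mono <|
    sup_le hle <| (fromEdgeSet_le H).mpr <| by
      rintro e ⟨rfl | rfl, -⟩
      exacts [ha, hb]
  have opposite (a b : Fin 6) (hab : K222.Adj a b) (ha : ¬H.Adj a (a + 3)) : H.Adj b (b + 3) := by
    have := (by decide : ∀ a b : Fin 6, K222.Adj a b → a ≠ a + 3 ∧ K222.Adj (a + 3) b ∧
      K222.Adj a (b + 3) ∧ K222.Adj (a + 3) (b + 3) ∧ b ≠ b + 3) a b hab
    exact hC4 _ _ _ _ this.1 ha (hle hab) (hle this.2.1) (hle this.2.2.1) (hle this.2.2.2.1)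
      this.2.2.2.2
  by_cases h03 : H.Adj 0 3
  · by_cases h14 : H.Adj 1 4
    · exact clique 0 1 (by decide) h03 h14
    · exact clique 0 2 (by decide) h03 (opposite 1 2 (by decide) h14)
  · exact clique 1 2 (by decide) (opposite 0 1 (by decide) h03) (opposite 0 2 (by decide) h03)

lemma K222_not_treewidthLE_three : ¬TreewidthLE K222 3 := by
  rintro ⟨ι, T, bag, hT, hcov, hedge, hpath, hcard⟩
  exact K222_not_cliqueFree_five (le_touchGraph hedge)
    (fun _ _ _ _ => touchGraph_adj_of_not_adj hT hpath hcov)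
    (cliqueFree_touchGraph hT hpath hcov hcard)

lemma K222_deleteEdges_treewidthLE_three {a b : Fin 6} (hab : K222.Adj a b) :
    TreewidthLE (K222.deleteEdges {s(a, b)}) 3 := by
  refine treewidthLE_of_starGraph (1 : Fin 3)
    ![{a, -(a + b), b + 3, -(a + b) + 3}, {-(a + b), a + 3, b + 3, -(a + b) + 3},
      {b, -(a + b), a + 3, -(a + b) + 3}] ?_ ?_ ?_ ?_ <;> revert a b <;> decide

lemma K222_exists_not_adj_avoiding : ∀ z₁ z₂ : Fin 6,
    ∃ x y, x ≠ y ∧ ¬K222.Adj x y ∧ x ≠ z₁ ∧ x ≠ z₂ ∧ y ≠ z₁ ∧ y ≠ z₂ := by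
  decide

namespace SimpleGraph

variable {W V : Type} {H : SimpleGraph W} {G : SimpleGraph V}

noncomputable def Hom.isoOfBijective (f : H →g G) (hf : Bijective f)
    (h : ∀ u v, G.Adj (f u) (f v) → H.Adj u v) : H ≃g G :=
  ⟨Equiv.ofBijective f hf, fun {u v} => ⟨h u v, f.map_adj⟩⟩

def Copy.deleteEdge (f : Copy H G) {u v : W} (h : ¬H.Adj u v) :
    Copy H (G.deleteEdges {s(f u, f v)}) where
  toHom := ⟨f, fun {p q} hpq => ⟨f.toHom.map_adj hpq, fun he => h <| by
    have : s(p, q) = s(u, v) := Sym2.map.injective f.injective (by simpa using he.1)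
    exact H.mem_edgeSet.mp (this ▸ H.mem_edgeSet.mpr hpq)⟩⟩
  injective' := f.injective

end SimpleGraph

section Minor

variable {W : Type} {H : SimpleGraph W}

lemma adj_of_subset_singleton {V : Type} {G : SimpleGraph V} {B : W → Set V} {g : W → V}
    (hadj : ∀ u v, H.Adj u v → ∃ a ∈ B u, ∃ b ∈ B v, G.Adj a b)
    {u v : W} (hu : B u ⊆ {g u}) (hv : B v ⊆ {g v}) (h : H.Adj u v) : G.Adj (g u) (g v) := by
  obtain ⟨a, ha, b, hb, hab⟩ := hadj u v h
  rwa [hu ha, hv hb] at hab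

lemma exists_not_adj_of_card_eq_five [Fintype W] (hcard : Fintype.card W = 5)
    {B : W → Set (Fin 6)} {g : W → Fin 6} (hg_inj : Injective g)
    (hdisj : ∀ u v : W, u ≠ v → Disjoint (B u) (B v))
    (hB : ∀ w, ∀ x ∈ B w, x ∈ Set.range g → x = g w)
    (hadj : ∀ u v, H.Adj u v → ∃ a ∈ B u, ∃ b ∈ B v, K222.Adj a b) :
    ∃ u v, u ≠ v ∧ ¬H.Adj u v := by
  obtain ⟨m, hm⟩ : ∃ m, m ∉ Set.range g := by
    by_contra! h
    have := Fintype.card_le_of_surjective g h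
    simp_all
  have hrange (x : Fin 6) (hx : x ≠ m) : x ∈ Set.range g := by
    let g' : W → {x // x ≠ m} := fun w => ⟨g w, fun h => hm ⟨w, h⟩⟩
    have hg' : Bijective g' := (Fintype.bijective_iff_injective_and_card g').mpr
      ⟨fun u v h => hg_inj (congrArg Subtype.val h), by simp [hcard]⟩
    obtain ⟨w, hw⟩ := hg'.2 ⟨x, hx⟩
    exact ⟨w, congrArg Subtype.val hw⟩
  obtain ⟨w₁, hw₁⟩ : ∃ w₁, ∀ w ≠ w₁, m ∉ B w := by
    by_cases h : ∃ w₁, m ∈ B w₁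
    · obtain ⟨w₁, hw₁⟩ := h
      exact ⟨w₁, fun w hw hmw => Set.disjoint_left.mp (hdisj w w₁ hw) hmw hw₁⟩
    · push Not at h
      have : Nonempty W := Fintype.card_pos_iff.mp (by omega)
      exact ⟨Classical.arbitrary W, fun w _ => h w⟩
  have hsing (w : W) (hw : w ≠ w₁) : B w ⊆ {g w} := fun x hx =>
    hB w x hx (hrange x fun h => hw₁ w hw (h ▸ hx))
  obtain ⟨x, y, hxy, hnadj, hxm, hxw₁, hym, hyw₁⟩ := K222_exists_not_adj_avoiding m (g w₁)
  obtain ⟨u, rfl⟩ := hrange x hxm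
  obtain ⟨v, rfl⟩ := hrange y hym
  have hu : u ≠ w₁ := fun h => hxw₁ (h ▸ rfl)
  have hv : v ≠ w₁ := fun h => hyw₁ (h ▸ rfl)
  exact ⟨u, v, fun h => hxy (h ▸ rfl),
    fun h => hnadj (adj_of_subset_singleton hadj (hsing u hu) (hsing v hv) h)⟩

lemma treewidthLE_three_of_isMinorOf_K222 (hm : IsMinorOf H K222)
    (hiso : IsEmpty (K222 ≃g H)) : TreewidthLE H 3 := by
  classical
  obtain ⟨B, hne, hdisj, -, hadj⟩ := hm
  choose g hg using hne
  have hg_inj : Injective g := fun u v h =>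
    by_contra fun huv => Set.disjoint_left.mp (hdisj u v huv) (hg u) (h ▸ hg v)
  have hB (w : W) (x : Fin 6) (hx : x ∈ B w) : x ∈ Set.range g → x = g w := by
    rintro ⟨w', rfl⟩
    by_contra h
    exact Set.disjoint_left.mp (hdisj w' w fun e => h (e ▸ rfl)) (hg w') hx
  have : Fintype W := .ofInjective g hg_inj
  have hcard : Fintype.card W ≤ 6 := by simpa using Fintype.card_le_of_injective g hg_inj
  obtain h | h | h : Fintype.card W ≤ 4 ∨ Fintype.card W = 5 ∨ Fintype.card W = 6 := by omega
  · exact treewidthLE_of_card_le h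
  · obtain ⟨u, v, huv, hnadj⟩ := exists_not_adj_of_card_eq_five h hg_inj hdisj hB hadj
    exact treewidthLE_of_not_adj huv hnadj (by omega)
  · have hsurj : Surjective g :=
      ((Fintype.bijective_iff_injective_and_card g).mpr ⟨hg_inj, by simp [h]⟩).2
    have hsing (w : W) : B w ⊆ {g w} := fun x hx => hB w x hx (hsurj x)
    let f : H →g K222 := ⟨g, fun h => adj_of_subset_singleton hadj (hsing _) (hsing _) h⟩
    by_cases hrefl : ∀ u v, K222.Adj (g u) (g v) → H.Adj u v
    · exact (hiso.false (f.isoOfBijective ⟨hg_inj, hsurj⟩ hrefl).symm).elim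
    · push Not at hrefl
      obtain ⟨u, v, huv, hnadj⟩ := hrefl
      exact (K222_deleteEdges_treewidthLE_three huv).of_copy ((f.toCopy hg_inj).deleteEdge hnadj)

end Minor

theorem K222_treewidth_four_minor_minimal :
    TreewidthLE K222 4 ∧ ¬ TreewidthLE K222 3 ∧
    ∀ (W : Type) (H : SimpleGraph W), IsMinorOf H K222 → IsEmpty (K222 ≃g H) →
      TreewidthLE H 3 :=
  ⟨K222_treewidthLE_four, K222_not_treewidthLE_three,
    fun _ _ => treewidthLE_three_of_isMinorOf_K222⟩
end
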